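/- arXiv:2306.02178 — 9 statements merged into one kernel-verified Lean document; each statement's English description precedes it below -/
import Mathlib

section
/- Let n ≥ 1 and let g : ℝⁿ → ℝ be a polynomial function. Then for every ℏ > 0 and every y ∈ ℝⁿ, ∫_{ℝⁿ} g(x) · exp((−‖x‖²/2 + ⟨x, y⟩)/ℏ) dx = (2πℏ)^{n/2} · exp(‖y‖²/(2ℏ)) · Σ_{i=0}^{∞} (ℏ/2)^i (Δ^i g)(y) / i!, where the sum has only finitely many nonzero terms (since Δ^i g = 0 for i large). -/
/-!
Both sides of the identity are linear functionals `L` of the polynomial `g` satisfying Gaussian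
integration by parts, `L (X_j q) = y_j L q + ℏ L (∂_j q)`, and such a functional is determined by
`L 1` (induct on the degree of monomials). For the integral the identity factorizes into the
one-dimensional integrations by parts `m (k + 1) = c m k + ℏ k m (k - 1)` for the moments
`m k = ∫ x^k e^{(-x²/2 + c x)/ℏ} dx`. For the series it comes from the commutator
`[Δ, X_j] = 2 ∂_j`, which gives `Δ^{i+1} (X_j q) = X_j Δ^{i+1} q + 2 (i + 1) ∂_j Δ^i q`; the
series is a finite sum since `Δ` lowers the total degree by two.
-/

open MeasureTheory Real

/-- The Laplacian of a multivariate polynomial: `Δ p = ∑ j ∂²p/∂x_j²`. -/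
noncomputable def mvLaplacian {n : ℕ} (p : MvPolynomial (Fin n) ℝ) :
    MvPolynomial (Fin n) ℝ :=
  ∑ j : Fin n, MvPolynomial.pderiv j (MvPolynomial.pderiv j p)

namespace MvPolynomial

variable {σ R : Type*} [CommSemiring R]

theorem pderiv_pderiv_comm (i j : σ) (p : MvPolynomial σ R) :
    pderiv i (pderiv j p) = pderiv j (pderiv i p) := by
  induction p using induction_on' with
  | monomial s a =>
    rw [pderiv_monomial, pderiv_monomial, pderiv_monomial, pderiv_monomial, tsub_right_comm]
    congr 1
    rcases eq_or_ne i j with rfl | hij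
    · rfl
    · simp only [Finsupp.tsub_apply, Finsupp.single_eq_of_ne hij, Finsupp.single_eq_of_ne hij.symm,
        Nat.sub_zero]
      ring
  | add p q hp hq => simp only [map_add, hp, hq]

theorem totalDegree_pderiv_le (i : σ) (p : MvPolynomial σ R) :
    (pderiv i p).totalDegree ≤ p.totalDegree - 1 := by
  refine Finset.sup_le fun m hm => ?_
  have hcoeff : coeff (m + Finsupp.single i 1) p ≠ 0 := by
    intro h
    rw [mem_support_iff, coeff_pderiv, h, zero_mul] at hm
    exact hm rfl
  have := le_totalDegree (mem_support_iff.mpr hcoeff)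
  rw [Finsupp.sum_add_index' (fun _ => rfl) (fun _ _ _ => rfl),
    Finsupp.sum_single_index rfl] at this
  omega

theorem pderiv_eq_zero_of_totalDegree_eq_zero {p : MvPolynomial σ R} (h : p.totalDegree = 0)
    (i : σ) : pderiv i p = 0 := by
  rw [totalDegree_eq_zero_iff_eq_C.mp h, pderiv_C]

/-- Stein's identity: integration by parts against the normal law of mean `z` and covariance
`t • 1`. -/
def SteinIdentity (z : σ → R) (t : R) (L : MvPolynomial σ R →ₗ[R] R) : Prop :=
  ∀ j q, L (X j * q) = z j * L q + t * L (pderiv j q)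

namespace SteinIdentity

variable {z : σ → R} {t : R} {L L' : MvPolynomial σ R →ₗ[R] R}

theorem smul (hL : SteinIdentity z t L) (c : R) : SteinIdentity z t (c • L) := by
  intro j q
  simp only [LinearMap.smul_apply, hL j q, smul_eq_mul]
  ring

theorem ext (hL : SteinIdentity z t L) (hL' : SteinIdentity z t L') (h1 : L 1 = L' 1) :
    L = L' := by
  suffices h : ∀ d (α : σ →₀ ℕ), α.degree ≤ d → ∀ c, L (monomial α c) = L' (monomial α c) from
    linearMap_ext fun α => LinearMap.ext fun c => h _ α le_rfl c
  intro d
  induction d with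
  | zero =>
    intro α hα c
    obtain rfl := (Finsupp.degree_eq_zero_iff α).mp (Nat.le_zero.mp hα)
    rw [← mul_one (monomial 0 c), ← C_apply, ← smul_eq_C_mul, map_smul, map_smul, h1]
  | succ d ih =>
    intro α hαd c
    rcases eq_or_ne α 0 with rfl | hα0
    · exact ih 0 (by simp) c
    obtain ⟨j, hj⟩ : ∃ j, α j ≠ 0 := by
      by_contra! h
      exact hα0 (Finsupp.ext h)
    set β := α - Finsupp.single j 1
    have hα : Finsupp.single j 1 + β = α :=
      add_tsub_cancel_of_le (Finsupp.single_le_iff.mpr (Nat.one_le_iff_ne_zero.mpr hj))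
    have hβ : β.degree ≤ d := by
      rw [← hα, map_add, Finsupp.degree_single] at hαd
      omega
    have hβ' : (β - Finsupp.single j 1).degree ≤ d :=
      (Finsupp.degree_mono tsub_le_self).trans hβ
    rw [← hα, monomial_single_add, pow_one, hL, hL', pderiv_monomial, ih β hβ, ih _ hβ']

end SteinIdentity

end MvPolynomial

open MvPolynomial

section Laplacian

variable {n : ℕ}

noncomputable def mvLaplacianₗ (n : ℕ) : Module.End ℝ (MvPolynomial (Fin n) ℝ) :=
  ∑ j : Fin n, (pderiv j).toLinearMap * (pderiv j).toLinearMap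

theorem coe_mvLaplacianₗ : ⇑(mvLaplacianₗ n) = mvLaplacian := by
  ext p : 1
  simp [mvLaplacianₗ, mvLaplacian]

theorem mvLaplacian_iterate_eq_pow (i : ℕ) :
    mvLaplacian^[i] = ⇑(mvLaplacianₗ n ^ i) := by
  rw [Module.End.coe_pow, coe_mvLaplacianₗ]

theorem pderiv_mvLaplacian (j : Fin n) (p : MvPolynomial (Fin n) ℝ) :
    pderiv j (mvLaplacian p) = mvLaplacian (pderiv j p) := by
  simp only [mvLaplacian, map_sum, pderiv_pderiv_comm j]

theorem pderiv_mvLaplacian_iterate (j : Fin n) (i : ℕ) (p : MvPolynomial (Fin n) ℝ) :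
    pderiv j (mvLaplacian^[i] p) = mvLaplacian^[i] (pderiv j p) :=
  Function.Commute.iterate_right (pderiv_mvLaplacian j) i p

theorem mvLaplacian_X_mul (j : Fin n) (q : MvPolynomial (Fin n) ℝ) :
    mvLaplacian (X j * q) = X j * mvLaplacian q + (2 : ℝ) • pderiv j q := by
  classical
  simp only [mvLaplacian, pderiv_mul, pderiv_X, map_add, Finset.mul_sum, Finset.sum_add_distrib,
    Pi.single_apply, apply_ite, map_zero, ite_mul, one_mul, zero_mul, Finset.sum_ite_eq,
    Finset.mem_univ, if_true]
  rw [two_smul]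
  abel

theorem mvLaplacian_iterate_succ_X_mul (j : Fin n) (i : ℕ) (q : MvPolynomial (Fin n) ℝ) :
    mvLaplacian^[i + 1] (X j * q)
      = X j * mvLaplacian^[i + 1] q + (2 * (i + 1) : ℝ) • pderiv j (mvLaplacian^[i] q) := by
  induction i with
  | zero => simp [mvLaplacian_X_mul]
  | succ i ih =>
    rw [Function.iterate_succ_apply', ih, ← coe_mvLaplacianₗ, map_add, map_smul, coe_mvLaplacianₗ,
      mvLaplacian_X_mul, ← pderiv_mvLaplacian]
    simp only [Function.iterate_succ_apply']
    rw [add_assoc, ← add_smul]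
    push_cast
    ring_nf

theorem totalDegree_mvLaplacian_le (p : MvPolynomial (Fin n) ℝ) :
    (mvLaplacian p).totalDegree ≤ p.totalDegree - 2 := by
  refine (totalDegree_finsetSum _ _).trans (Finset.sup_le fun j _ => ?_)
  have h₁ := totalDegree_pderiv_le j p
  have h₂ := totalDegree_pderiv_le j (pderiv j p)
  omega

theorem mvLaplacian_eq_zero_of_totalDegree_le_one {p : MvPolynomial (Fin n) ℝ}
    (h : p.totalDegree ≤ 1) : mvLaplacian p = 0 :=
  Finset.sum_eq_zero fun j _ => pderiv_eq_zero_of_totalDegree_eq_zero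
    (Nat.le_zero.mp ((totalDegree_pderiv_le j p).trans (by omega))) j

theorem mvLaplacian_iterate_eq_zero {p : MvPolynomial (Fin n) ℝ} {i : ℕ}
    (h : p.totalDegree < 2 * i) : mvLaplacian^[i] p = 0 := by
  induction i generalizing p with
  | zero => omega
  | succ i ih =>
    rw [Function.iterate_succ_apply]
    by_cases hp : p.totalDegree ≤ 1
    · rw [mvLaplacian_eq_zero_of_totalDegree_le_one hp, mvLaplacian_iterate_eq_pow, map_zero]
    · exact ih (by have := totalDegree_mvLaplacian_le p; omega)

end Laplacian

section HeatSeries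

variable {n : ℕ}

theorem summable_heatSeries (t : ℝ) (z : Fin n → ℝ) (p : MvPolynomial (Fin n) ℝ) :
    Summable fun i : ℕ => (t / 2) ^ i * eval z (mvLaplacian^[i] p) / i.factorial :=
  summable_of_ne_finset_zero (s := Finset.range (p.totalDegree + 1)) fun i hi => by
    rw [Finset.mem_range] at hi
    rw [mvLaplacian_iterate_eq_zero (by omega), map_zero, mul_zero, zero_div]

/-- `heatEval t z p = (exp (t Δ / 2) p) z`. -/
noncomputable def heatEval (t : ℝ) (z : Fin n → ℝ) : MvPolynomial (Fin n) ℝ →ₗ[ℝ] ℝ where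
  toFun p := ∑' i : ℕ, (t / 2) ^ i * eval z (mvLaplacian^[i] p) / i.factorial
  map_add' p q := by
    rw [← (summable_heatSeries t z p).tsum_add (summable_heatSeries t z q)]
    congr 1 with i
    rw [mvLaplacian_iterate_eq_pow, map_add, map_add]
    ring
  map_smul' c p := by
    rw [RingHom.id_apply, smul_eq_mul, ← tsum_mul_left]
    congr 1 with i
    rw [mvLaplacian_iterate_eq_pow, map_smul, smul_eval]
    ring

theorem heatEval_apply (t : ℝ) (z : Fin n → ℝ) (p : MvPolynomial (Fin n) ℝ) :
    heatEval t z p = ∑' i : ℕ, (t / 2) ^ i * eval z (mvLaplacian^[i] p) / i.factorial :=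
  rfl

theorem heatEval_one (t : ℝ) (z : Fin n → ℝ) : heatEval t z 1 = 1 := by
  rw [heatEval_apply, tsum_eq_single 0 fun i hi => ?_]
  · simp
  · rw [mvLaplacian_iterate_eq_zero (by rw [totalDegree_one]; omega), map_zero, mul_zero, zero_div]

theorem steinIdentity_heatEval (t : ℝ) (z : Fin n → ℝ) : SteinIdentity z t (heatEval t z) := by
  intro j q
  set a : MvPolynomial (Fin n) ℝ → ℕ → ℝ :=
    fun p i => (t / 2) ^ i * eval z (mvLaplacian^[i] p) / i.factorial
  have ha : ∀ p, Summable (a p) := summable_heatSeries t z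
  have hstep : ∀ i, a (X j * q) (i + 1) = z j * a q (i + 1) + t * a (pderiv j q) i := by
    intro i
    simp only [a, mvLaplacian_iterate_succ_X_mul, pderiv_mvLaplacian_iterate, map_add, map_mul,
      smul_eval, eval_X, Nat.factorial_succ]
    push_cast
    field_simp
    ring
  calc heatEval t z (X j * q) = a (X j * q) 0 + ∑' i, a (X j * q) (i + 1) :=
        (ha _).tsum_eq_zero_add
    _ = z j * (a q 0 + ∑' i, a q (i + 1)) + t * ∑' i, a (pderiv j q) i := by
        have h0 : a (X j * q) 0 = z j * a q 0 := by simp [a]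
        rw [h0, tsum_congr hstep, (((summable_nat_add_iff 1).mpr (ha q)).mul_left (z j)).tsum_add
          ((ha (pderiv j q)).mul_left t), tsum_mul_left, tsum_mul_left]
        ring
    _ = z j * heatEval t z q + t * heatEval t z (pderiv j q) := by
        rw [← (ha q).tsum_eq_zero_add]
        rfl

end HeatSeries

noncomputable def gaussianMoment (t c : ℝ) (k : ℕ) : ℝ :=
  ∫ x : ℝ, x ^ k * exp ((-x ^ 2 / 2 + x * c) / t)

section GaussianMoments

variable {t : ℝ}

theorem integrable_pow_mul_exp_quadratic (ht : 0 < t) (c : ℝ) (k : ℕ) :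
    Integrable fun x : ℝ => x ^ k * exp ((-x ^ 2 / 2 + x * c) / t) := by
  have hg : Integrable fun x : ℝ => exp (c ^ 2 / t) * ‖x ^ k * exp (-(4 * t)⁻¹ * x ^ 2)‖ := by
    have := integrable_rpow_mul_exp_neg_mul_sq (b := (4 * t)⁻¹) (by positivity) (s := k)
      (by linarith [(Nat.cast_nonneg k : (0 : ℝ) ≤ k)])
    simpa only [rpow_natCast] using this.norm.const_mul _
  refine hg.mono' (by fun_prop) (ae_of_all _ fun x => ?_)
  rw [norm_mul, norm_mul, norm_of_nonneg (exp_pos _).le, norm_of_nonneg (exp_pos _).le,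
    mul_left_comm, ← exp_add]
  gcongr
  rw [div_add' _ _ _ ht.ne', div_le_div_iff_of_pos_right ht]
  nlinarith [sq_nonneg (x / 2 - c), mul_inv_cancel₀ (by positivity : 4 * t ≠ 0)]

theorem gaussianMoment_zero (ht : 0 < t) (c : ℝ) :
    gaussianMoment t c 0 = √(2 * π * t) * exp (c ^ 2 / (2 * t)) := by
  have h : ∀ x : ℝ, x ^ 0 * exp ((-x ^ 2 / 2 + x * c) / t)
      = exp (c ^ 2 / (2 * t)) * exp (-(2 * t)⁻¹ * (x - c) ^ 2) := by
    intro x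
    rw [pow_zero, one_mul, ← exp_add]
    congr 1
    field_simp
    ring
  simp_rw [gaussianMoment, h, integral_const_mul,
    integral_sub_right_eq_self (fun x => exp (-(2 * t)⁻¹ * x ^ 2)) c, integral_gaussian]
  rw [div_inv_eq_mul, mul_comm]
  ring_nf

theorem gaussianMoment_succ (ht : 0 < t) (c : ℝ) (k : ℕ) :
    gaussianMoment t c (k + 1) = c * gaussianMoment t c k + t * k * gaussianMoment t c (k - 1) := by
  set E : ℝ → ℝ := fun x => exp ((-x ^ 2 / 2 + x * c) / t)
  have hI : ∀ m, Integrable fun x => x ^ m * E x := integrable_pow_mul_exp_quadratic ht c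
  have hE : ∀ x, HasDerivAt (fun x => -t * E x) ((x - c) * E x) x := by
    intro x
    have hφ : HasDerivAt (fun x : ℝ => (-x ^ 2 / 2 + x * c) / t) ((c - x) / t) x := by
      refine (((hasDerivAt_pow 2 x).fun_neg.div_const 2).fun_add
        ((hasDerivAt_id' x).mul_const c)).div_const t |>.congr_deriv ?_
      ring
    refine (hφ.exp.const_mul (-t)).congr_deriv ?_
    simp only [E]
    field_simp
    ring
  have ibp := integral_mul_deriv_eq_deriv_mul_of_integrable (u := fun x => x ^ k)
    (u' := fun x => k * x ^ (k - 1)) (fun x _ => hasDerivAt_pow k x) (fun x _ => hE x)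
    (((hI (k + 1)).sub ((hI k).const_mul c)).congr (ae_of_all _ fun x => by
      simp only [Pi.mul_apply, Pi.sub_apply]; ring))
    (((hI (k - 1)).const_mul (-(t * k))).congr (ae_of_all _ fun x => by
      simp only [Pi.mul_apply]; ring))
    (((hI k).const_mul (-t)).congr (ae_of_all _ fun x => by
      simp only [Pi.mul_apply]; ring))
  have lhs : ∫ x, x ^ k * ((x - c) * E x)
      = gaussianMoment t c (k + 1) - c * gaussianMoment t c k := by
    rw [gaussianMoment, gaussianMoment, ← integral_const_mul, ← integral_sub (hI _)
      ((hI k).const_mul c)]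
    congr 1 with x
    ring
  have rhs : ∫ x, k * x ^ (k - 1) * (-t * E x) = -(t * k * gaussianMoment t c (k - 1)) := by
    rw [gaussianMoment, ← integral_const_mul, ← integral_neg]
    congr 1 with x
    ring
  linarith

end GaussianMoments

section GaussianIntegral

variable {ι : Type*} [Fintype ι] {t : ℝ}

theorem eval_monomial_mul_exp_eq_prod (y x : EuclideanSpace ℝ ι) (α : ι →₀ ℕ) (c : ℝ) :
    eval (fun j => x j) (monomial α c) * exp ((-‖x‖ ^ 2 / 2 + inner ℝ x y) / t)
      = c * ∏ j, x j ^ α j * exp ((-x j ^ 2 / 2 + x j * y j) / t) := by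
  have hexp : (-‖x‖ ^ 2 / 2 + inner ℝ x y) / t = ∑ j, (-x j ^ 2 / 2 + x j * y j) / t := by
    simp only [EuclideanSpace.real_norm_sq_eq, PiLp.inner_apply, RCLike.inner_apply, conj_trivial,
      mul_comm (y _)]
    rw [← Finset.sum_div, Finset.sum_add_distrib, ← Finset.sum_div, Finset.sum_neg_distrib]
  rw [eval_monomial, Finsupp.prod_fintype _ _ fun j => pow_zero _, hexp, exp_sum, mul_assoc,
    Finset.prod_mul_distrib]

theorem integrable_eval_mul_exp (ht : 0 < t) (y : EuclideanSpace ℝ ι) (p : MvPolynomial ι ℝ) :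
    Integrable fun x : EuclideanSpace ℝ ι =>
      eval (fun j => x j) p * exp ((-‖x‖ ^ 2 / 2 + inner ℝ x y) / t) := by
  induction p using induction_on' with
  | monomial α c =>
    simp_rw [eval_monomial_mul_exp_eq_prod]
    refine Integrable.const_mul ?_ c
    rw [← (PiLp.volume_preserving_toLp ι).integrable_comp_emb
      (MeasurableEquiv.toLp 2 (ι → ℝ)).measurableEmbedding]
    exact Integrable.fintype_prod (f := fun j x => x ^ α j * exp ((-x ^ 2 / 2 + x * y j) / t))
      fun j => integrable_pow_mul_exp_quadratic ht _ _
  | add p q hp hq =>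
    simp only [map_add, add_mul]
    exact hp.add hq

noncomputable def gaussianIntegral (ht : 0 < t) (y : EuclideanSpace ℝ ι) :
    MvPolynomial ι ℝ →ₗ[ℝ] ℝ where
  toFun p := ∫ x : EuclideanSpace ℝ ι,
    eval (fun j => x j) p * exp ((-‖x‖ ^ 2 / 2 + inner ℝ x y) / t)
  map_add' p q := by
    simp only [map_add, add_mul]
    exact integral_add (integrable_eval_mul_exp ht y p) (integrable_eval_mul_exp ht y q)
  map_smul' c p := by
    simp only [smul_eval, mul_assoc, integral_const_mul, RingHom.id_apply, smul_eq_mul]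

theorem gaussianIntegral_monomial (ht : 0 < t) (y : EuclideanSpace ℝ ι) (α : ι →₀ ℕ) (c : ℝ) :
    gaussianIntegral ht y (monomial α c) = c * ∏ j, gaussianMoment t (y j) (α j) := by
  simp_rw [gaussianIntegral, LinearMap.coe_mk, AddHom.coe_mk, eval_monomial_mul_exp_eq_prod,
    integral_const_mul]
  rw [← (PiLp.volume_preserving_toLp ι).integral_comp
      (MeasurableEquiv.toLp 2 (ι → ℝ)).measurableEmbedding]
  exact congrArg (c * ·) (integral_fintype_prod_eq_prod
    (f := fun j x => x ^ α j * exp ((-x ^ 2 / 2 + x * y j) / t)))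

theorem gaussianIntegral_one (ht : 0 < t) (y : EuclideanSpace ℝ ι) :
    gaussianIntegral ht y 1
      = (2 * π * t) ^ ((Fintype.card ι : ℝ) / 2) * exp (‖y‖ ^ 2 / (2 * t)) := by
  rw [← C_1, ← monomial_zero', gaussianIntegral_monomial, one_mul]
  simp only [Finsupp.coe_zero, Pi.zero_apply, gaussianMoment_zero ht, Finset.prod_mul_distrib,
    Finset.prod_const, Finset.card_univ, ← exp_sum, ← Finset.sum_div,
    EuclideanSpace.real_norm_sq_eq]
  rw [sqrt_eq_rpow, ← rpow_natCast, ← rpow_mul (by positivity), one_div_mul_eq_div]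

theorem steinIdentity_gaussianIntegral (ht : 0 < t) (y : EuclideanSpace ℝ ι) :
    SteinIdentity (fun j => y j) t (gaussianIntegral ht y) := by
  classical
  intro j q
  induction q using induction_on' with
  | monomial β c =>
    rw [← pow_one (X j), ← monomial_single_add, pderiv_monomial, gaussianIntegral_monomial,
      gaussianIntegral_monomial, gaussianIntegral_monomial]
    have split : ∀ γ : ι →₀ ℕ, (∀ k ≠ j, γ k = β k) →
        ∏ k, gaussianMoment t (y k) (γ k) =
          gaussianMoment t (y j) (γ j) * ∏ k ∈ Finset.univ.erase j, gaussianMoment t (y k) (β k) :=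
      fun γ hγ => by
        rw [← Finset.mul_prod_erase _ _ (Finset.mem_univ j)]
        exact congrArg _ (Finset.prod_congr rfl fun k hk => by
          rw [hγ k (Finset.ne_of_mem_erase hk)])
    rw [split _ fun k hk => by simp [Finsupp.single_eq_of_ne hk], split β fun _ _ => rfl,
      split _ fun k hk => by simp [Finsupp.single_eq_of_ne hk]]
    simp only [Finsupp.add_apply, Finsupp.tsub_apply, Finsupp.single_eq_same, add_comm 1,
      gaussianMoment_succ ht]
    ring
  | add p q hp hq =>
    simp only [mul_add, map_add, hp, hq]
    ring

end GaussianIntegral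

theorem gaussian_integral_polynomial_expansion_general (n : ℕ)
    (g : MvPolynomial (Fin n) ℝ) :
    (∃ N : ℕ, ∀ i ≥ N, mvLaplacian^[i] g = 0) ∧
    ∀ ℏ : ℝ, 0 < ℏ → ∀ y : EuclideanSpace ℝ (Fin n),
      ∫ x : EuclideanSpace ℝ (Fin n),
          (MvPolynomial.eval (fun j => x j) g) *
            Real.exp ((-‖x‖ ^ 2 / 2 + inner ℝ x y) / ℏ)
        = (2 * π * ℏ) ^ ((n : ℝ) / 2) * Real.exp (‖y‖ ^ 2 / (2 * ℏ)) *
            ∑' i : ℕ, (ℏ / 2) ^ i *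
              (MvPolynomial.eval (fun j => y j) (mvLaplacian^[i] g)) / (i.factorial) := by
  refine ⟨⟨g.totalDegree + 1, fun i hi => mvLaplacian_iterate_eq_zero (by omega)⟩,
    fun ℏ hℏ y => ?_⟩
  have key : gaussianIntegral hℏ y
      = ((2 * π * ℏ) ^ ((n : ℝ) / 2) * exp (‖y‖ ^ 2 / (2 * ℏ))) • heatEval ℏ (fun j => y j) :=
    (steinIdentity_gaussianIntegral hℏ y).ext ((steinIdentity_heatEval ℏ _).smul _) (by
      rw [gaussianIntegral_one, LinearMap.smul_apply, heatEval_one, Fintype.card_fin,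
        smul_eq_mul, mul_one])
  exact LinearMap.congr_fun key g

/-- For `f(x) = -‖x‖²/2` and polynomial `g`, the Gaussian integral
`∫ g(x) exp((-‖x‖²/2 + ⟨x,y⟩)/ℏ) dx` equals
`(2πℏ)^{n/2} exp(‖y‖²/(2ℏ)) ∑_i (ℏ/2)^i (Δ^i g)(y)/i!`,
the sum having finitely many nonzero terms. -/
theorem gaussian_integral_polynomial_expansion (n : ℕ) (hn : 1 ≤ n)
    (g : MvPolynomial (Fin n) ℝ) :
    (∃ N : ℕ, ∀ i ≥ N, mvLaplacian^[i] g = 0) ∧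
    ∀ ℏ : ℝ, 0 < ℏ → ∀ y : EuclideanSpace ℝ (Fin n),
      ∫ x : EuclideanSpace ℝ (Fin n),
          (MvPolynomial.eval (fun j => x j) g) *
            Real.exp ((-‖x‖ ^ 2 / 2 + inner ℝ x y) / ℏ)
        = (2 * π * ℏ) ^ ((n : ℝ) / 2) * Real.exp (‖y‖ ^ 2 / (2 * ℏ)) *
            ∑' i : ℕ, (ℏ / 2) ^ i *
              (MvPolynomial.eval (fun j => y j) (mvLaplacian^[i] g)) / (i.factorial) :=
  gaussian_integral_polynomial_expansion_general n g
end

section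
/- Let I ⊆ ℝ be an open interval and let f : ℝ → ℝ be five times differentiable on I with f''(x) > 0 for all x ∈ I. Then the identity 9 f''(x)² f⁽⁵⁾(x) − 45 f''(x) f'''(x) f⁽⁴⁾(x) + 40 f'''(x)³ = 0 holds for all x ∈ I if and only if the third derivative of the function x ↦ f''(x)^{−2/3} vanishes identically on I. -/
open Set

/-!
Write `g = f''`. Differentiating `g ^ c` three times on the interval, where `g > 0`, gives
`(g ^ c)''' = c g ^ (c - 3) (g² g''' + 3 (c - 1) g g' g'' + (c - 1)(c - 2) g'³)`.
For `c = -2/3` the bracket is `1/9` of `9 g² g''' - 45 g g' g'' + 40 g'³`, and the prefactor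
`c g ^ (c - 3)` never vanishes.
-/

theorem HasDerivAt.rpow_const_mul {g P : ℝ → ℝ} {g' P' x : ℝ} (p : ℝ)
    (hg : HasDerivAt g g' x) (hP : HasDerivAt P P' x) (hx : 0 < g x) :
    HasDerivAt (fun t => g t ^ p * P t) (g x ^ (p - 1) * (p * g' * P x + g x * P')) x := by
  refine ((hg.rpow_const (p := p) (Or.inl hx.ne')).mul hP).congr_deriv ?_
  rw [Real.rpow_sub_one hx.ne']
  field_simp

theorem hasDerivAt_iterate_deriv {f : ℝ → ℝ} {x : ℝ} (k : ℕ)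
    (h : DifferentiableAt ℝ (deriv^[k] f) x) :
    HasDerivAt (deriv^[k] f) (deriv^[k + 1] f x) x := by
  rw [Function.iterate_succ_apply']
  exact h.hasDerivAt

theorem eqOn_iterate_deriv_succ {u v w : ℝ → ℝ} {U : Set ℝ} {n : ℕ} (hU : IsOpen U)
    (huv : EqOn (deriv^[n] u) v U) (hv : ∀ x ∈ U, HasDerivAt v (w x) x) :
    EqOn (deriv^[n + 1] u) w U := by
  intro x hx
  rw [Function.iterate_succ_apply', (huv.eventuallyEq_of_mem (hU.mem_nhds hx)).deriv_eq]
  exact (hv x hx).deriv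

theorem eqOn_iterate_deriv_three_rpow {g g₁ g₂ g₃ : ℝ → ℝ} {U : Set ℝ} (c : ℝ) (hU : IsOpen U)
    (hpos : ∀ x ∈ U, 0 < g x) (hg : ∀ x ∈ U, HasDerivAt g (g₁ x) x)
    (hg₁ : ∀ x ∈ U, HasDerivAt g₁ (g₂ x) x) (hg₂ : ∀ x ∈ U, HasDerivAt g₂ (g₃ x) x) :
    EqOn (deriv^[3] fun t => g t ^ c)
      (fun t => c * g t ^ (c - 3) * (g t ^ 2 * g₃ t + 3 * (c - 1) * g t * g₁ t * g₂ t
        + (c - 1) * (c - 2) * g₁ t ^ 3)) U := by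
  have h₁ : EqOn (deriv^[1] fun t => g t ^ c) (fun t => g t ^ (c - 1) * (c * g₁ t)) U := by
    refine eqOn_iterate_deriv_succ (n := 0) hU (fun _ _ => rfl) fun x hx => ?_
    exact ((hg x hx).rpow_const (Or.inl (hpos x hx).ne')).congr_deriv (by ring)
  have h₂ : EqOn (deriv^[2] fun t => g t ^ c)
      (fun t => g t ^ (c - 2) * (c * (c - 1) * g₁ t ^ 2 + c * g t * g₂ t)) U := by
    refine eqOn_iterate_deriv_succ hU h₁ fun x hx => ?_
    refine ((hg x hx).rpow_const_mul _ ((hg₁ x hx).const_mul c) (hpos x hx)).congr_deriv ?_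
    -- `ring_nf` also normalizes the exponents, identifying `c - 1 - 1` with `c - 2`.
    ring_nf
  refine eqOn_iterate_deriv_succ hU h₂ fun x hx => ?_
  have hP : HasDerivAt (fun t => c * (c - 1) * g₁ t ^ 2 + c * g t * g₂ t)
      (c * (c - 1) * (2 * g₁ x * g₂ x) + (c * g₁ x * g₂ x + c * g x * g₃ x)) x := by
    refine ((((hg₁ x hx).pow 2).const_mul (c * (c - 1))).add
      (((hg x hx).const_mul c).mul (hg₂ x hx))).congr_deriv ?_
    ring
  refine ((hg x hx).rpow_const_mul _ hP (hpos x hx)).congr_deriv ?_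
  ring_nf

/-- Section 6, first equation of system (sys1): for `f` five times differentiable
on an open interval with `f'' > 0`, the ODE
`9 f''² f⁽⁵⁾ - 45 f'' f''' f⁽⁴⁾ + 40 f'''³ = 0` holds on the interval iff
`(f''^{-2/3})''' = 0` on the interval. -/
theorem ode_iff_third_deriv_power_vanishes (a b : ℝ) (f : ℝ → ℝ)
    (hdiff : ∀ k ≤ 4, ∀ x ∈ Ioo a b, DifferentiableAt ℝ (deriv^[k] f) x)
    (hpos : ∀ x ∈ Ioo a b, 0 < deriv^[2] f x) :
    (∀ x ∈ Ioo a b,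
        9 * (deriv^[2] f x) ^ 2 * deriv^[5] f x
          - 45 * deriv^[2] f x * deriv^[3] f x * deriv^[4] f x
          + 40 * (deriv^[3] f x) ^ 3 = 0) ↔
    (∀ x ∈ Ioo a b,
        deriv^[3] (fun t => (deriv^[2] f t) ^ (-(2 : ℝ) / 3)) x = 0) := by
  have hderiv (k : ℕ) (hk : k ≤ 4) (x : ℝ) (hx : x ∈ Ioo a b) :=
    hasDerivAt_iterate_deriv k (hdiff k hk x hx)
  have hformula := eqOn_iterate_deriv_three_rpow (-(2 : ℝ) / 3) isOpen_Ioo hpos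
    (hderiv 2 (by norm_num)) (hderiv 3 (by norm_num)) (hderiv 4 (by norm_num))
  refine forall₂_congr fun x hx => ?_
  have hprefactor : -(2 : ℝ) / 27 * deriv^[2] f x ^ (-(2 : ℝ) / 3 - 3) ≠ 0 :=
    mul_ne_zero (by norm_num) (Real.rpow_pos_of_pos (hpos x hx) _).ne'
  rw [hformula hx, ← mul_eq_zero_iff_left hprefactor]
  ring_nf
end

section
/- Let I ⊆ ℝ be an open interval and let f : ℝ → ℝ be five times differentiable on I with f''(x) > 0 for all x ∈ I. Then 9 f''(x)² f⁽⁵⁾(x) − 45 f''(x) f'''(x) f⁽⁴⁾(x) + 40 f'''(x)³ = 0 for all x ∈ I if and only if there exist constants a₀, a₁, a₂ ∈ ℝ such that a₀ + a₁x + a₂x² > 0 and f''(x) = (a₀ + a₁x + a₂x²)^{−3/2} for all x ∈ I. -/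
/-!
Put `h = (f'')^{-2/3}`. Differentiating three times gives
`h''' = -(2/27) (f'')^{-11/3} (9 f''² f⁽⁵⁾ - 45 f'' f''' f⁽⁴⁾ + 40 f'''³)`,
so the ODE says exactly that `h''' = 0`, i.e. that `h` is a quadratic polynomial `Q` on the
interval; and `h = Q` is the same as `Q > 0 ∧ f'' = Q^{-3/2}`.
-/

open Set

section ThirdDerivative

variable {s : Set ℝ} {h h₁ h₂ h₃ : ℝ → ℝ}

lemma exists_eqOn_add_of_hasDerivAt {f g φ : ℝ → ℝ} (hs : IsOpen s) (hs' : IsPreconnected s)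
    (hf : ∀ x ∈ s, HasDerivAt f (φ x) x) (hg : ∀ x ∈ s, HasDerivAt g (φ x) x) :
    ∃ c, ∀ x ∈ s, f x = g x + c :=
  hs.exists_eq_add_of_deriv_eq hs'
    (fun x hx => (hf x hx).differentiableAt.differentiableWithinAt)
    (fun x hx => (hg x hx).differentiableAt.differentiableWithinAt)
    (fun x hx => (hf x hx).deriv.trans (hg x hx).deriv.symm)

lemma HasDerivAt.eq_of_eqOn {f g : ℝ → ℝ} {f' g' x : ℝ} (hs : IsOpen s) (hfg : EqOn f g s)
    (hx : x ∈ s) (hf : HasDerivAt f f' x) (hg : HasDerivAt g g' x) : f' = g' :=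
  hf.unique (hg.congr_of_eventuallyEq (Filter.eventuallyEq_of_mem (hs.mem_nhds hx) hfg))

lemma hasDerivAt_quadratic (c₀ c₁ c₂ x : ℝ) :
    HasDerivAt (fun x => c₀ + c₁ * x + c₂ * x ^ 2) (c₁ + 2 * c₂ * x) x := by
  have := (((hasDerivAt_id' x).const_mul c₁).const_add c₀).add
    ((hasDerivAt_pow 2 x).const_mul c₂)
  exact this.congr_deriv (by push_cast; ring)

variable (hs : IsOpen s)
  (d₀ : ∀ x ∈ s, HasDerivAt h (h₁ x) x) (d₁ : ∀ x ∈ s, HasDerivAt h₁ (h₂ x) x)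
  (d₂ : ∀ x ∈ s, HasDerivAt h₂ (h₃ x) x)
include hs d₀ d₁ d₂

lemma exists_quadratic_of_third_deriv_eq_zero (hs' : IsPreconnected s)
    (h₃_zero : ∀ x ∈ s, h₃ x = 0) :
    ∃ c₀ c₁ c₂ : ℝ, ∀ x ∈ s, h x = c₀ + c₁ * x + c₂ * x ^ 2 := by
  obtain ⟨c₂, hc₂⟩ := exists_eqOn_add_of_hasDerivAt hs hs' (g := fun _ => 0)
    (fun x hx => h₃_zero x hx ▸ d₂ x hx) (fun x _ => hasDerivAt_const x 0)
  obtain ⟨c₁, hc₁⟩ := exists_eqOn_add_of_hasDerivAt hs hs' (g := fun x => c₂ * x) d₁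
    (fun x hx => by simpa [hc₂ x hx] using (hasDerivAt_id x).const_mul c₂)
  obtain ⟨c₀, hc₀⟩ := exists_eqOn_add_of_hasDerivAt hs hs' d₀ fun x hx =>
    (hasDerivAt_quadratic 0 c₁ (c₂ / 2) x).congr_deriv (by rw [hc₁ x hx]; ring)
  exact ⟨c₀, c₁, c₂ / 2, fun x hx => by rw [hc₀ x hx]; ring⟩

lemma third_deriv_eq_zero_of_quadratic {c₀ c₁ c₂ : ℝ}
    (hq : EqOn h (fun x => c₀ + c₁ * x + c₂ * x ^ 2) s) : ∀ x ∈ s, h₃ x = 0 := by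
  have e₁ : EqOn h₁ (fun x => c₁ + 2 * c₂ * x) s := fun x hx =>
    (d₀ x hx).eq_of_eqOn hs hq hx (hasDerivAt_quadratic c₀ c₁ c₂ x)
  have e₂ : EqOn h₂ (fun _ => 2 * c₂) s := fun x hx =>
    (d₁ x hx).eq_of_eqOn hs e₁ hx <| by
      simpa using ((hasDerivAt_id x).const_mul (2 * c₂)).const_add c₁
  exact fun x hx => (d₂ x hx).eq_of_eqOn hs e₂ hx (hasDerivAt_const x _)

lemma third_deriv_eq_zero_iff_quadratic (hs' : IsPreconnected s) :
    (∀ x ∈ s, h₃ x = 0) ↔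
      ∃ c₀ c₁ c₂ : ℝ, ∀ x ∈ s, h x = c₀ + c₁ * x + c₂ * x ^ 2 :=
  ⟨exists_quadratic_of_third_deriv_eq_zero hs d₀ d₁ d₂ hs',
    fun ⟨_, _, _, hq⟩ => third_deriv_eq_zero_of_quadratic hs d₀ d₁ d₂ hq⟩

end ThirdDerivative

lemma Real.rpow_eq_iff_pos_and_eq_rpow_inv {t q p : ℝ} (ht : 0 < t) (hp : p ≠ 0) :
    t ^ p = q ↔ 0 < q ∧ t = q ^ p⁻¹ := by
  constructor
  · rintro rfl
    refine ⟨Real.rpow_pos_of_pos ht p, ?_⟩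
    rw [← Real.rpow_mul ht.le, mul_inv_cancel₀ hp, Real.rpow_one]
  · rintro ⟨hq, rfl⟩
    rw [← Real.rpow_mul hq.le, inv_mul_cancel₀ hp, Real.rpow_one]

section NegTwoThirdsPower

variable {g g₁ g₂ g₃ : ℝ → ℝ} {x : ℝ}

lemma hasDerivAt_rpow_neg_two_thirds (hg : 0 < g x) (d : HasDerivAt g (g₁ x) x) :
    HasDerivAt (fun y => g y ^ (-2 / 3 : ℝ)) (-2 / 3 * g x ^ (-5 / 3 : ℝ) * g₁ x) x :=
  (d.rpow_const (Or.inl hg.ne')).congr_deriv (by norm_num; ring)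

lemma hasDerivAt_rpow_neg_two_thirds_deriv (hg : 0 < g x) (d₀ : HasDerivAt g (g₁ x) x)
    (d₁ : HasDerivAt g₁ (g₂ x) x) :
    HasDerivAt (fun y => -2 / 3 * g y ^ (-5 / 3 : ℝ) * g₁ y)
      (10 / 9 * g x ^ (-8 / 3 : ℝ) * g₁ x ^ 2 - 2 / 3 * g x ^ (-5 / 3 : ℝ) * g₂ x) x :=
  (((d₀.rpow_const (p := -5 / 3) (Or.inl hg.ne')).const_mul (-2 / 3)).mul d₁).congr_deriv
    (by norm_num; ring)

lemma hasDerivAt_rpow_neg_two_thirds_deriv_deriv (hg : 0 < g x) (d₀ : HasDerivAt g (g₁ x) x)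
    (d₁ : HasDerivAt g₁ (g₂ x) x) (d₂ : HasDerivAt g₂ (g₃ x) x) :
    HasDerivAt
      (fun y => 10 / 9 * g y ^ (-8 / 3 : ℝ) * g₁ y ^ 2 - 2 / 3 * g y ^ (-5 / 3 : ℝ) * g₂ y)
      (-2 / 27 * g x ^ (-11 / 3 : ℝ) *
        (9 * g x ^ 2 * g₃ x - 45 * g x * g₁ x * g₂ x + 40 * g₁ x ^ 3)) x := by
  have e₈ : g x ^ (-8 / 3 : ℝ) = g x ^ (-11 / 3 : ℝ) * g x := by
    rw [← Real.rpow_add_one hg.ne']; norm_num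
  have e₅ : g x ^ (-5 / 3 : ℝ) = g x ^ (-11 / 3 : ℝ) * g x ^ 2 := by
    rw [← Real.rpow_add_natCast hg.ne']; norm_num
  have d₈ := (d₀.rpow_const (p := -8 / 3) (Or.inl hg.ne')).const_mul (10 / 9)
  have d₅ := (d₀.rpow_const (p := -5 / 3) (Or.inl hg.ne')).const_mul (2 / 3)
  refine ((d₈.mul (d₁.pow 2)).sub (d₅.mul d₂)).congr_deriv ?_
  norm_num at e₈ e₅ ⊢
  rw [e₈, e₅]
  ring

end NegTwoThirdsPower

/-- Lemma 6.1 (key step): for `f` five times differentiable on an open interval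
with `f'' > 0`, the ODE `9 f''² f⁽⁵⁾ - 45 f'' f''' f⁽⁴⁾ + 40 f'''³ = 0` holds
on the interval iff `f'' = (a₀ + a₁ x + a₂ x²)^{-3/2}` for some constants. -/
theorem ode_iff_second_deriv_is_power_of_quadratic (a b : ℝ) (f : ℝ → ℝ)
    (hdiff : ∀ k ≤ 4, ∀ x ∈ Ioo a b, DifferentiableAt ℝ (deriv^[k] f) x)
    (hpos : ∀ x ∈ Ioo a b, 0 < deriv^[2] f x) :
    (∀ x ∈ Ioo a b,
        9 * (deriv^[2] f x) ^ 2 * deriv^[5] f x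
          - 45 * deriv^[2] f x * deriv^[3] f x * deriv^[4] f x
          + 40 * (deriv^[3] f x) ^ 3 = 0) ↔
    (∃ a₀ a₁ a₂ : ℝ, ∀ x ∈ Ioo a b,
        0 < a₀ + a₁ * x + a₂ * x ^ 2 ∧
        deriv^[2] f x = (a₀ + a₁ * x + a₂ * x ^ 2) ^ (-(3 : ℝ) / 2)) := by
  have d : ∀ k ≤ 4, ∀ x ∈ Ioo a b, HasDerivAt (deriv^[k] f) (deriv^[k + 1] f x) x :=
    fun k hk x hx => by
      rw [Function.iterate_succ_apply']
      exact (hdiff k hk x hx).hasDerivAt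
  have third_deriv_iff := third_deriv_eq_zero_iff_quadratic isOpen_Ioo
    (fun x hx => hasDerivAt_rpow_neg_two_thirds (hpos x hx) (d 2 (by norm_num) x hx))
    (fun x hx => hasDerivAt_rpow_neg_two_thirds_deriv (hpos x hx)
      (d 2 (by norm_num) x hx) (d 3 (by norm_num) x hx))
    (fun x hx => hasDerivAt_rpow_neg_two_thirds_deriv_deriv (hpos x hx)
      (d 2 (by norm_num) x hx) (d 3 (by norm_num) x hx) (d 4 le_rfl x hx))
    isPreconnected_Ioo
  calc _ ↔ ∀ x ∈ Ioo a b, -2 / 27 * deriv^[2] f x ^ (-11 / 3 : ℝ) *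
          (9 * (deriv^[2] f x) ^ 2 * deriv^[5] f x
            - 45 * deriv^[2] f x * deriv^[3] f x * deriv^[4] f x
            + 40 * (deriv^[3] f x) ^ 3) = 0 :=
        forall₂_congr fun x hx => by
          have := Real.rpow_pos_of_pos (hpos x hx) (-11 / 3)
          rw [mul_eq_zero, or_iff_right (by positivity)]
    _ ↔ _ := third_deriv_iff
    _ ↔ _ := exists₃_congr fun a₀ a₁ a₂ => forall₂_congr fun x hx => by
        rw [Real.rpow_eq_iff_pos_and_eq_rpow_inv (hpos x hx) (by norm_num),
          show (-2 / 3 : ℝ)⁻¹ = -3 / 2 by norm_num]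
end

section
/- Let f : (1, ∞) → ℝ be given by f(x) = √(x² − 1), and let g : (1, ∞) → ℝ be twice differentiable. Then 12 f''(x)² g''(x) − 12 f''(x) f'''(x) g'(x) + (5 f'''(x)² − 3 f''(x) f⁽⁴⁾(x)) g(x) = 0 for all x ∈ (1, ∞) if and only if there exist constants c₁, c₂ ∈ ℝ such that g(x) = c₁ (x+1)^{−1/2} + c₂ (x−1)^{−1/2} for all x ∈ (1, ∞). -/
/-!
Write `ρ = (x² - 1)^(-1/2)`. Then `ρ' = -x ρ³`, so every derivative of `f = √(x² - 1)` is a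
polynomial in `x` and `ρ` (`f' = x ρ`, `f'' = -ρ³`, `f''' = 3x ρ⁵`), and using only
`(x² - 1) ρ² = 1` the residual of (sys1) becomes `3 ρ⁸ (4 (x² - 1) g'' + 12 x g' + 3 g)`.
The functions `(x ± 1)^(-1/2)` solve this ODE with nowhere vanishing Wronskian on `(1, ∞)`. By
Abel's identity the Wronskian of any two solutions is a constant multiple of theirs, so by
Cramer's rule every solution is a fixed linear combination of the two.
-/

open Set Filter Topology

section SecondOrderLinearODE

variable {a b c y y₁ y₂ g : ℝ → ℝ} {s : Set ℝ}

def IsSolutionOn (a b c : ℝ → ℝ) (s : Set ℝ) (y : ℝ → ℝ) : Prop :=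
  ∀ x ∈ s, DifferentiableAt ℝ y x ∧ DifferentiableAt ℝ (deriv y) x ∧
    a x * deriv (deriv y) x + b x * deriv y x + c x * y x = 0

noncomputable def wronskian (y₁ y₂ : ℝ → ℝ) (x : ℝ) : ℝ := y₁ x * deriv y₂ x - deriv y₁ x * y₂ x

theorem IsSolutionOn.congr (hs : IsOpen s) (hy : IsSolutionOn a b c s y) (hg : EqOn g y s) :
    IsSolutionOn a b c s g := by
  intro x hx
  obtain ⟨hd, hd', heq⟩ := hy x hx
  have h₀ : g =ᶠ[𝓝 x] y := eventuallyEq_of_mem (hs.mem_nhds hx) hg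
  have h₁ : deriv g =ᶠ[𝓝 x] deriv y := h₀.deriv
  refine ⟨hd.congr_of_eventuallyEq h₀, hd'.congr_of_eventuallyEq h₁, ?_⟩
  rwa [h₀.eq_of_nhds, h₀.deriv_eq, h₁.deriv_eq]

theorem IsSolutionOn.linear_combination (hs : IsOpen s) (h₁ : IsSolutionOn a b c s y₁)
    (h₂ : IsSolutionOn a b c s y₂) (c₁ c₂ : ℝ) :
    IsSolutionOn a b c s (fun x => c₁ * y₁ x + c₂ * y₂ x) := by
  have hderiv : ∀ x ∈ s, HasDerivAt (fun x => c₁ * y₁ x + c₂ * y₂ x)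
      (c₁ * deriv y₁ x + c₂ * deriv y₂ x) x := fun x hx =>
    ((h₁ x hx).1.hasDerivAt.const_mul c₁).add ((h₂ x hx).1.hasDerivAt.const_mul c₂)
  intro x hx
  obtain ⟨-, hd₁', e₁⟩ := h₁ x hx
  obtain ⟨-, hd₂', e₂⟩ := h₂ x hx
  have hderiv₂ : HasDerivAt (deriv fun x => c₁ * y₁ x + c₂ * y₂ x)
      (c₁ * deriv (deriv y₁) x + c₂ * deriv (deriv y₂) x) x :=
    ((hd₁'.hasDerivAt.const_mul c₁).add (hd₂'.hasDerivAt.const_mul c₂)).congr_of_eventuallyEq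
      (eventuallyEq_of_mem (hs.mem_nhds hx) fun x hx => (hderiv x hx).deriv)
  refine ⟨(hderiv x hx).differentiableAt, hderiv₂.differentiableAt, ?_⟩
  rw [hderiv₂.deriv, (hderiv x hx).deriv]
  linear_combination c₁ * e₁ + c₂ * e₂

/-- Abel's identity. -/
theorem IsSolutionOn.hasDerivAt_wronskian (h₁ : IsSolutionOn a b c s y₁)
    (h₂ : IsSolutionOn a b c s y₂) {x : ℝ} (hx : x ∈ s) (ha : a x ≠ 0) :
    HasDerivAt (wronskian y₁ y₂) (-(b x / a x) * wronskian y₁ y₂ x) x := by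
  obtain ⟨hd₁, hd₁', e₁⟩ := h₁ x hx
  obtain ⟨hd₂, hd₂', e₂⟩ := h₂ x hx
  refine ((hd₁.hasDerivAt.mul hd₂'.hasDerivAt).sub
    (hd₁'.hasDerivAt.mul hd₂.hasDerivAt)).congr_deriv ?_
  field_simp
  unfold wronskian
  linear_combination y₁ x * e₂ - y₂ x * e₁

theorem hasDerivAt_div_eq_zero_of_hasDerivAt_mul_self {F G : ℝ → ℝ} {x k : ℝ}
    (hF : HasDerivAt F (k * F x) x) (hG : HasDerivAt G (k * G x) x) (hG₀ : G x ≠ 0) :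
    HasDerivAt (fun t => F t / G t) 0 x :=
  (hF.div hG hG₀).congr_deriv (by field_simp; ring)

theorem IsSolutionOn.exists_const_div_wronskian (hs : IsOpen s) (hs' : IsPreconnected s)
    (ha : ∀ x ∈ s, a x ≠ 0) (h₁ : IsSolutionOn a b c s y₁) (h₂ : IsSolutionOn a b c s y₂)
    (hW : ∀ x ∈ s, wronskian y₁ y₂ x ≠ 0) {z₁ z₂ : ℝ → ℝ} (hz₁ : IsSolutionOn a b c s z₁)
    (hz₂ : IsSolutionOn a b c s z₂) :
    ∃ k, ∀ x ∈ s, wronskian z₁ z₂ x / wronskian y₁ y₂ x = k := by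
  have hderiv : ∀ x ∈ s, HasDerivAt (fun t => wronskian z₁ z₂ t / wronskian y₁ y₂ t) 0 x :=
    fun x hx => hasDerivAt_div_eq_zero_of_hasDerivAt_mul_self
      (hz₁.hasDerivAt_wronskian hz₂ hx (ha x hx)) (h₁.hasDerivAt_wronskian h₂ hx (ha x hx))
      (hW x hx)
  exact hs.exists_is_const_of_deriv_eq_zero hs'
    (fun x hx => (hderiv x hx).differentiableAt.differentiableWithinAt)
    fun x hx => (hderiv x hx).deriv

/-- Cramer's rule: the coefficients are `W(g, y₂) / W(y₁, y₂)` and `W(y₁, g) / W(y₁, y₂)`. -/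
theorem IsSolutionOn.exists_eq_linear_combination (hs : IsOpen s) (hs' : IsPreconnected s)
    (ha : ∀ x ∈ s, a x ≠ 0) (h₁ : IsSolutionOn a b c s y₁) (h₂ : IsSolutionOn a b c s y₂)
    (hW : ∀ x ∈ s, wronskian y₁ y₂ x ≠ 0) (hg : IsSolutionOn a b c s g) :
    ∃ c₁ c₂ : ℝ, ∀ x ∈ s, g x = c₁ * y₁ x + c₂ * y₂ x := by
  obtain ⟨c₁, hc₁⟩ := IsSolutionOn.exists_const_div_wronskian hs hs' ha h₁ h₂ hW hg h₂
  obtain ⟨c₂, hc₂⟩ := IsSolutionOn.exists_const_div_wronskian hs hs' ha h₁ h₂ hW h₁ hg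
  refine ⟨c₁, c₂, fun x hx => ?_⟩
  rw [← hc₁ x hx, ← hc₂ x hx]
  field_simp [hW x hx]
  unfold wronskian
  ring

end SecondOrderLinearODE

theorem hasDerivAt_rpow_add_const {x d : ℝ} (p : ℝ) (hx : 0 < x + d) :
    HasDerivAt (fun t => (t + d) ^ p) (p * (x + d) ^ (p - 1)) x := by
  simpa using ((hasDerivAt_id x).add_const d).rpow_const (p := p) (Or.inl hx.ne')

theorem eqOn_deriv_rpow_add_const (d p : ℝ) :
    EqOn (deriv fun t => (t + d) ^ p) (fun t => p * (t + d) ^ (p - 1)) (Ioi (-d)) :=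
  fun _ hx => (hasDerivAt_rpow_add_const p (neg_lt_iff_pos_add.mp hx)).deriv

theorem hasDerivAt_deriv_rpow_add_const {x d : ℝ} (p : ℝ) (hx : 0 < x + d) :
    HasDerivAt (deriv fun t => (t + d) ^ p) (p * ((p - 1) * (x + d) ^ (p - 2))) x := by
  have h := (hasDerivAt_rpow_add_const (p - 1) hx).const_mul p
  rw [sub_sub, one_add_one_eq_two] at h
  exact h.congr_of_eventuallyEq (eventuallyEq_of_mem
    (isOpen_Ioi.mem_nhds (neg_lt_iff_pos_add.mpr hx)) (eqOn_deriv_rpow_add_const d p))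

theorem wronskian_rpow_add_const {x d₁ d₂ : ℝ} (p : ℝ) (h₁ : 0 < x + d₁) (h₂ : 0 < x + d₂) :
    wronskian (fun t => (t + d₁) ^ p) (fun t => (t + d₂) ^ p) x
      = p * (d₁ - d₂) * (x + d₁) ^ (p - 1) * (x + d₂) ^ (p - 1) := by
  have hp : p = p - 1 + 1 := by ring
  rw [wronskian, (hasDerivAt_rpow_add_const p h₁).deriv, (hasDerivAt_rpow_add_const p h₂).deriv,
    hp, Real.rpow_add_one h₁.ne', Real.rpow_add_one h₂.ne', ← hp]
  ring

theorem isSolutionOn_rpow_add_const {d : ℝ} (hd : d ^ 2 = 1) :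
    IsSolutionOn (fun x => 4 * (x ^ 2 - 1)) (fun x => 12 * x) (fun _ => 3) (Ioi 1)
      (fun x => (x + d) ^ (-(1 : ℝ) / 2)) := by
  intro x (hx : 1 < x)
  have hxd : 0 < x + d := by nlinarith
  have h₁ := hasDerivAt_rpow_add_const (-(1 : ℝ) / 2) hxd
  have h₂ := hasDerivAt_deriv_rpow_add_const (-(1 : ℝ) / 2) hxd
  refine ⟨h₁.differentiableAt, h₂.differentiableAt, ?_⟩
  dsimp only
  rw [h₂.deriv, h₁.deriv]
  have e₁ : (x + d) ^ (-(1 : ℝ) / 2 - 1) = (x + d) ^ (-(1 : ℝ) / 2 - 2) * (x + d) := by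
    rw [← Real.rpow_add_one hxd.ne']; norm_num
  have e₀ : (x + d) ^ (-(1 : ℝ) / 2) = (x + d) ^ (-(1 : ℝ) / 2 - 2) * (x + d) ^ 2 := by
    rw [sq, ← mul_assoc, ← e₁, ← Real.rpow_add_one hxd.ne']; norm_num
  rw [e₀, e₁]
  linear_combination 3 * (x + d) ^ (-(1 : ℝ) / 2 - 2) * hd

theorem eqOn_iterate_deriv_succ_s8 {s : Set ℝ} (hs : IsOpen s) {n : ℕ} {F G G' : ℝ → ℝ}
    (h : EqOn (deriv^[n] F) G s) (hG : ∀ x ∈ s, HasDerivAt G (G' x) x) :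
    EqOn (deriv^[n + 1] F) G' s := by
  intro x hx
  rw [Function.iterate_succ_apply']
  exact ((hG x hx).congr_of_eventuallyEq (eventuallyEq_of_mem (hs.mem_nhds hx) h)).deriv

/-- The left-hand side of the second equation of (sys1) for the pair `(f, g)`. -/
noncomputable def oneLoopResidual (f g : ℝ → ℝ) (x : ℝ) : ℝ :=
  12 * (deriv^[2] f x) ^ 2 * deriv^[2] g x - 12 * deriv^[2] f x * deriv^[3] f x * deriv g x
    + (5 * (deriv^[3] f x) ^ 2 - 3 * deriv^[2] f x * deriv^[4] f x) * g x

namespace SqrtSqSubOne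

noncomputable def ρ (x : ℝ) : ℝ := (√(x ^ 2 - 1))⁻¹

variable {x : ℝ}

theorem sq_sub_one_mul_ρ_sq (hx : 1 < x) : (x ^ 2 - 1) * ρ x ^ 2 = 1 := by
  have : 0 < x ^ 2 - 1 := by nlinarith
  rw [ρ, inv_pow, Real.sq_sqrt this.le, mul_inv_cancel₀ this.ne']

theorem ρ_pos (hx : 1 < x) : 0 < ρ x :=
  inv_pos.mpr (Real.sqrt_pos.mpr (by nlinarith))

theorem hasDerivAt_sqrt_sq_sub_one (hx : 1 < x) :
    HasDerivAt (fun t => √(t ^ 2 - 1)) (x * ρ x) x := by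
  have hq : x ^ 2 - 1 ≠ 0 := by nlinarith
  refine (((hasDerivAt_pow 2 x).sub_const 1).sqrt hq).congr_deriv ?_
  rw [ρ]
  field_simp
  ring

theorem hasDerivAt_ρ (hx : 1 < x) : HasDerivAt ρ (-x * ρ x ^ 3) x := by
  have hs : √(x ^ 2 - 1) ≠ 0 := Real.sqrt_ne_zero'.mpr (by nlinarith)
  refine ((hasDerivAt_sqrt_sq_sub_one hx).inv hs).congr_deriv ?_
  rw [ρ]
  field_simp

theorem hasDerivAt_id_mul_ρ (hx : 1 < x) : HasDerivAt (fun t => t * ρ t) (-ρ x ^ 3) x :=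
  ((hasDerivAt_id' x).mul (hasDerivAt_ρ hx)).congr_deriv <| by
    linear_combination (-ρ x) * sq_sub_one_mul_ρ_sq hx

theorem hasDerivAt_neg_ρ_pow_three (hx : 1 < x) :
    HasDerivAt (fun t => -ρ t ^ 3) (3 * x * ρ x ^ 5) x :=
  ((hasDerivAt_ρ hx).pow 3).neg.congr_deriv (by ring)

theorem hasDerivAt_three_mul_ρ_pow_five (hx : 1 < x) :
    HasDerivAt (fun t => 3 * t * ρ t ^ 5) (3 * ρ x ^ 5 - 15 * x ^ 2 * ρ x ^ 7) x :=
  (((hasDerivAt_id' x).const_mul 3).mul ((hasDerivAt_ρ hx).pow 5)).congr_deriv <| by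
    rw [Pi.pow_apply]; ring

theorem oneLoopResidual_eq (g : ℝ → ℝ) (hx : 1 < x) :
    oneLoopResidual (fun t => √(t ^ 2 - 1)) g x
      = 3 * ρ x ^ 8 * (4 * (x ^ 2 - 1) * deriv (deriv g) x + 12 * x * deriv g x + 3 * g x) := by
  have h₁ : EqOn (deriv^[1] fun t => √(t ^ 2 - 1)) (fun t => t * ρ t) (Ioi 1) :=
    eqOn_iterate_deriv_succ_s8 isOpen_Ioi (n := 0) (fun _ _ => rfl)
      fun _ hy => hasDerivAt_sqrt_sq_sub_one hy
  have h₂ := eqOn_iterate_deriv_succ_s8 isOpen_Ioi h₁ fun _ hy => hasDerivAt_id_mul_ρ hy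
  have h₃ := eqOn_iterate_deriv_succ_s8 isOpen_Ioi h₂ fun _ hy => hasDerivAt_neg_ρ_pow_three hy
  have h₄ := eqOn_iterate_deriv_succ_s8 isOpen_Ioi h₃ fun _ hy => hasDerivAt_three_mul_ρ_pow_five hy
  rw [oneLoopResidual, h₂ hx, h₃ hx, h₄ hx, Function.iterate_succ_apply', Function.iterate_one]
  linear_combination -12 * ρ x ^ 6 * deriv (deriv g) x * sq_sub_one_mul_ρ_sq hx

theorem oneLoopResidual_eq_zero_iff (g : ℝ → ℝ) (hx : 1 < x) :
    oneLoopResidual (fun t => √(t ^ 2 - 1)) g x = 0 ↔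
      4 * (x ^ 2 - 1) * deriv (deriv g) x + 12 * x * deriv g x + 3 * g x = 0 := by
  have hρ : 3 * ρ x ^ 8 ≠ 0 := by have := ρ_pos hx; positivity
  rw [oneLoopResidual_eq g hx, mul_eq_zero, or_iff_right hρ]

theorem wronskian_rpow_add_one_rpow_sub_one_ne_zero (hx : 1 < x) :
    wronskian (fun t => (t + 1) ^ (-(1 : ℝ) / 2)) (fun t => (t - 1) ^ (-(1 : ℝ) / 2)) x ≠ 0 := by
  simp only [sub_eq_add_neg]
  rw [wronskian_rpow_add_const _ (by linarith) (by linarith)]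
  exact mul_ne_zero (mul_ne_zero (by norm_num) (Real.rpow_pos_of_pos (by linarith) _).ne')
    (Real.rpow_pos_of_pos (by linarith) _).ne'

end SqrtSqSubOne

open SqrtSqSubOne in
/-- Theorem 6.1, case 1): for `f(x) = √(x²-1)` on `(1,∞)`, a twice
differentiable `g` satisfies the second equation of system (sys1) iff
`g(x) = c₁(x+1)^{-1/2} + c₂(x-1)^{-1/2}`. -/
theorem one_var_admissible_sqrt_sq_sub_one (g : ℝ → ℝ)
    (hg : ∀ x ∈ Ioi (1 : ℝ), DifferentiableAt ℝ g x ∧ DifferentiableAt ℝ (deriv g) x) :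
    (∀ x ∈ Ioi (1 : ℝ),
        12 * (deriv^[2] (fun t => Real.sqrt (t ^ 2 - 1)) x) ^ 2 * deriv^[2] g x
          - 12 * deriv^[2] (fun t => Real.sqrt (t ^ 2 - 1)) x
              * deriv^[3] (fun t => Real.sqrt (t ^ 2 - 1)) x * deriv g x
          + (5 * (deriv^[3] (fun t => Real.sqrt (t ^ 2 - 1)) x) ^ 2
              - 3 * deriv^[2] (fun t => Real.sqrt (t ^ 2 - 1)) x
                  * deriv^[4] (fun t => Real.sqrt (t ^ 2 - 1)) x) * g x = 0) ↔
    (∃ c₁ c₂ : ℝ, ∀ x ∈ Ioi (1 : ℝ),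
        g x = c₁ * (x + 1) ^ (-(1 : ℝ) / 2) + c₂ * (x - 1) ^ (-(1 : ℝ) / 2)) := by
  change (∀ x ∈ Ioi (1 : ℝ), oneLoopResidual (fun t => √(t ^ 2 - 1)) g x = 0) ↔ _
  have h₁ : IsSolutionOn (fun x => 4 * (x ^ 2 - 1)) (fun x => 12 * x) (fun _ => 3) (Ioi 1)
      (fun x => (x + 1) ^ (-(1 : ℝ) / 2)) := isSolutionOn_rpow_add_const (by norm_num)
  have h₂ : IsSolutionOn (fun x => 4 * (x ^ 2 - 1)) (fun x => 12 * x) (fun _ => 3) (Ioi 1)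
      (fun x => (x - 1) ^ (-(1 : ℝ) / 2)) := by
    simpa only [sub_eq_add_neg] using isSolutionOn_rpow_add_const (d := -1) (by norm_num)
  constructor
  · exact fun h => IsSolutionOn.exists_eq_linear_combination isOpen_Ioi isPreconnected_Ioi
      (fun x (hx : 1 < x) => by nlinarith) h₁ h₂
      (fun _ hx => wronskian_rpow_add_one_rpow_sub_one_ne_zero hx)
      fun x hx => ⟨(hg x hx).1, (hg x hx).2, (oneLoopResidual_eq_zero_iff g hx).1 (h x hx)⟩
  · rintro ⟨c₁, c₂, hc⟩ x hx
    exact (oneLoopResidual_eq_zero_iff g hx).2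
      ((h₁.linear_combination isOpen_Ioi h₂ c₁ c₂).congr isOpen_Ioi hc x hx).2.2
end

section
/- Let f : (0, ∞) → ℝ be given by f(x) = 1/x, and let g : (0, ∞) → ℝ be twice differentiable. Then 12 f''(x)² g''(x) − 12 f''(x) f'''(x) g'(x) + (5 f'''(x)² − 3 f''(x) f⁽⁴⁾(x)) g(x) = 0 for all x ∈ (0, ∞) if and only if there exist constants c₁, c₂ ∈ ℝ such that g(x) = c₁ x^{−1/2} + c₂ x^{−3/2} for all x ∈ (0, ∞). -/
/-!
Since `(1/x)'' = 2/x³`, `(1/x)''' = -6/x⁴` and `(1/x)⁗ = 24/x⁵`, the equation is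
`12/x⁸` times the Euler equation `4x²g'' + 12xg' + 3g = 0`. For `H = x^{3/2} g` one computes
`H'' = x^{-1/2}/4 · (4x²g'' + 12xg' + 3g)`, so the solutions are exactly the `g` for which `H`
is affine on `(0, ∞)`, i.e. `g = x^{-3/2} (c₂ + c₁ x)`.
-/

open Set Filter Topology

theorem iterate_deriv_one_div (k : ℕ) (x : ℝ) :
    deriv^[k] (fun t : ℝ => 1 / t) x = (-1) ^ k * k.factorial * x ^ (-1 - k : ℤ) := by
  simp only [one_div]
  exact iter_deriv_inv k x

theorem sys1_one_div_eq_mul_euler (g : ℝ → ℝ) {x : ℝ} (hx : x ≠ 0) :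
    12 * (deriv^[2] (fun t : ℝ => 1 / t) x) ^ 2 * deriv^[2] g x
          - 12 * deriv^[2] (fun t : ℝ => 1 / t) x
              * deriv^[3] (fun t : ℝ => 1 / t) x * deriv g x
          + (5 * (deriv^[3] (fun t : ℝ => 1 / t) x) ^ 2
              - 3 * deriv^[2] (fun t : ℝ => 1 / t) x
                  * deriv^[4] (fun t : ℝ => 1 / t) x) * g x
      = 12 / x ^ 8 * (4 * x ^ 2 * deriv (deriv g) x + 12 * x * deriv g x + 3 * g x) := by
  simp only [iterate_deriv_one_div, Function.iterate_succ_apply', Function.iterate_zero_apply]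
  norm_num [zpow_neg]
  field_simp
  ring

theorem IsOpen.forall_hasDerivAt_deriv_zero_iff {s : Set ℝ} (hs : IsOpen s)
    (hs' : IsPreconnected s) {f : ℝ → ℝ} (hf : DifferentiableOn ℝ f s) :
    (∀ x ∈ s, HasDerivAt (deriv f) 0 x) ↔ ∃ a b : ℝ, ∀ x ∈ s, f x = a + b * x := by
  constructor
  · intro hf'
    obtain ⟨b, hb⟩ := hs.exists_is_const_of_deriv_eq_zero hs'
      (fun x hx => (hf' x hx).differentiableAt.differentiableWithinAt)
      (fun x hx => (hf' x hx).deriv)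
    obtain ⟨a, ha⟩ := hs.exists_eq_add_of_deriv_eq hs' hf
      (differentiableOn_id.const_mul b) (fun x hx => by simp [hb x hx])
    exact ⟨a, b, fun x hx => (ha hx).trans (add_comm _ _)⟩
  · rintro ⟨a, b, hab⟩ x hx
    have hderiv : ∀ y ∈ s, deriv f y = b := fun y hy => by
      have : f =ᶠ[𝓝 y] fun z => a + b * z := eventuallyEq_of_mem (hs.mem_nhds hy) hab
      rw [this.deriv_eq]
      simp
    exact (hasDerivAt_const x b).congr_of_eventuallyEq
      (eventuallyEq_of_mem (hs.mem_nhds hx) hderiv)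

theorem hasDerivAt_rpow_mul {g : ℝ → ℝ} {x : ℝ} (hx : 0 < x) (hg : DifferentiableAt ℝ g x)
    (p : ℝ) :
    HasDerivAt (fun y => y ^ p * g y) (p * x ^ (p - 1) * g x + x ^ p * deriv g x) x :=
  (Real.hasDerivAt_rpow_const (Or.inl hx.ne')).mul hg.hasDerivAt

theorem hasDerivAt_deriv_rpow_three_halves_mul {g : ℝ → ℝ}
    (hg : ∀ x ∈ Ioi (0 : ℝ), DifferentiableAt ℝ g x ∧ DifferentiableAt ℝ (deriv g) x)
    {x : ℝ} (hx : 0 < x) :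
    HasDerivAt (deriv fun y => y ^ ((3 : ℝ) / 2) * g y)
      (x ^ (-(1 : ℝ) / 2) / 4
        * (4 * x ^ 2 * deriv (deriv g) x + 12 * x * deriv g x + 3 * g x)) x := by
  have hH : ∀ y ∈ Ioi (0 : ℝ), deriv (fun y => y ^ ((3 : ℝ) / 2) * g y) y
      = 3 / 2 * (y ^ ((1 : ℝ) / 2) * g y) + y ^ ((3 : ℝ) / 2) * deriv g y := by
    intro y hy
    rw [(hasDerivAt_rpow_mul hy (hg y hy).1 _).deriv]
    norm_num
    ring
  have hH' := ((hasDerivAt_rpow_mul hx (hg x hx).1 ((1 : ℝ) / 2)).const_mul (3 / 2)).add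
    (hasDerivAt_rpow_mul hx (hg x hx).2 ((3 : ℝ) / 2))
  refine (hH'.congr_of_eventuallyEq (eventuallyEq_of_mem (Ioi_mem_nhds hx) hH)).congr_deriv ?_
  have h1 : x ^ ((1 : ℝ) / 2) = x * x ^ (-(1 : ℝ) / 2) := by
    rw [← Real.rpow_one_add' hx.le (by norm_num)]; norm_num
  have h3 : x ^ ((3 : ℝ) / 2) = x ^ 2 * x ^ (-(1 : ℝ) / 2) := by
    rw [← Real.rpow_natCast, ← Real.rpow_add hx]; norm_num
  norm_num [h1, h3]
  ring

theorem rpow_three_halves_mul_eq_iff {x y a b : ℝ} (hx : 0 < x) :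
    x ^ ((3 : ℝ) / 2) * y = a + b * x ↔ y = b * x ^ (-(1 : ℝ) / 2) + a * x ^ (-(3 : ℝ) / 2) := by
  have h3 : x ^ (-(3 : ℝ) / 2) = (x ^ ((3 : ℝ) / 2))⁻¹ := by
    rw [neg_div, Real.rpow_neg hx.le]
  have h1 : x ^ (-(1 : ℝ) / 2) = x * x ^ (-(3 : ℝ) / 2) := by
    rw [← Real.rpow_one_add' hx.le (by norm_num)]; norm_num
  rw [h1, h3]
  field_simp
  constructor <;> intro h <;> linarith

/-- Theorem 6.1, case 2): for `f(x) = 1/x` on `(0,∞)`, a twice differentiable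
`g` satisfies the second equation of system (sys1) iff
`g(x) = c₁ x^{-1/2} + c₂ x^{-3/2}`. -/
theorem one_var_admissible_inv (g : ℝ → ℝ)
    (hg : ∀ x ∈ Ioi (0 : ℝ), DifferentiableAt ℝ g x ∧ DifferentiableAt ℝ (deriv g) x) :
    (∀ x ∈ Ioi (0 : ℝ),
        12 * (deriv^[2] (fun t : ℝ => 1 / t) x) ^ 2 * deriv^[2] g x
          - 12 * deriv^[2] (fun t : ℝ => 1 / t) x
              * deriv^[3] (fun t : ℝ => 1 / t) x * deriv g x
          + (5 * (deriv^[3] (fun t : ℝ => 1 / t) x) ^ 2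
              - 3 * deriv^[2] (fun t : ℝ => 1 / t) x
                  * deriv^[4] (fun t : ℝ => 1 / t) x) * g x = 0) ↔
    (∃ c₁ c₂ : ℝ, ∀ x ∈ Ioi (0 : ℝ),
        g x = c₁ * x ^ (-(1 : ℝ) / 2) + c₂ * x ^ (-(3 : ℝ) / 2)) := by
  set H : ℝ → ℝ := fun y => y ^ ((3 : ℝ) / 2) * g y
  have hH : DifferentiableOn ℝ H (Ioi 0) := fun x hx =>
    (hasDerivAt_rpow_mul hx (hg x hx).1 _).differentiableAt.differentiableWithinAt
  calc _ ↔ ∀ x ∈ Ioi (0 : ℝ),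
        4 * x ^ 2 * deriv (deriv g) x + 12 * x * deriv g x + 3 * g x = 0 := by
        refine forall₂_congr fun x (hx : 0 < x) => ?_
        rw [sys1_one_div_eq_mul_euler g hx.ne', mul_eq_zero_iff_left (by positivity)]
    _ ↔ ∀ x ∈ Ioi (0 : ℝ), HasDerivAt (deriv H) 0 x := by
        refine forall₂_congr fun x (hx : 0 < x) => ?_
        have hH'' := hasDerivAt_deriv_rpow_three_halves_mul hg hx
        have hfactor : x ^ (-(1 : ℝ) / 2) / 4 ≠ 0 := by positivity
        exact ⟨fun h => by rwa [h, mul_zero] at hH'',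
          fun h => (mul_eq_zero_iff_left hfactor).mp (hH''.unique h)⟩
    _ ↔ ∃ a b : ℝ, ∀ x ∈ Ioi (0 : ℝ), H x = a + b * x :=
        isOpen_Ioi.forall_hasDerivAt_deriv_zero_iff isPreconnected_Ioi hH
    _ ↔ _ := by
        rw [exists_comm]
        exact exists₂_congr fun b a => forall₂_congr fun x hx => rpow_three_halves_mul_eq_iff hx
end

section
/- Let f : (0, ∞) → ℝ be given by f(x) = √x, and let g : (0, ∞) → ℝ be twice differentiable. Then 12 f''(x)² g''(x) − 12 f''(x) f'''(x) g'(x) + (5 f'''(x)² − 3 f''(x) f⁽⁴⁾(x)) g(x) = 0 for all x ∈ (0, ∞) if and only if there exist constants c₁, c₂ ∈ ℝ such that g(x) = c₁ + c₂ x^{−1/2} for all x ∈ (0, ∞). -/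
/-! For `f = √·` the coefficient `5 f'''² - 3 f'' f⁽⁴⁾` of `g` vanishes identically, and what is
left of the equation is `12 f''³ (g' / f'')' = 0`. Since `f''` has no zero on `(0, ∞)`, this says
`g' = K f''`, i.e. `g = a + K f' = a + (K / 2) x^{-1/2}`. -/

open Set

section Wronskian

variable {𝕜 : Type*} [RCLike 𝕜] {s : Set 𝕜}

theorem IsOpen.exists_eq_const_mul_of_deriv_mul_eq (hs : IsOpen s) (hs' : IsPreconnected s)
    {φ ψ : 𝕜 → 𝕜} (hφ : DifferentiableOn 𝕜 φ s) (hψ : DifferentiableOn 𝕜 ψ s)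
    (hψ0 : ∀ x ∈ s, ψ x ≠ 0) (h : ∀ x ∈ s, deriv φ x * ψ x = φ x * deriv ψ x) :
    ∃ K, ∀ x ∈ s, φ x = K * ψ x := by
  obtain ⟨K, hK⟩ := hs.exists_is_const_of_deriv_eq_zero hs' (hφ.div hψ hψ0) fun x hx => by
    rw [deriv_div (hφ.differentiableAt (hs.mem_nhds hx)) (hψ.differentiableAt (hs.mem_nhds hx))
      (hψ0 x hx), h x hx, sub_self, zero_div, Pi.zero_apply]
  refine ⟨K, fun x hx => ?_⟩
  rw [← hK x hx, Pi.div_apply, div_mul_cancel₀ _ (hψ0 x hx)]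

theorem IsOpen.forall_eq_zero_iff_exists_eq_add_mul_deriv (hs : IsOpen s)
    (hs' : IsPreconnected s) {f g : 𝕜 → 𝕜} (hf : DifferentiableOn 𝕜 (deriv^[2] f) s)
    (hf0 : ∀ x ∈ s, deriv^[2] f x ≠ 0)
    (hcoef : ∀ x ∈ s, 5 * (deriv^[3] f x) ^ 2 = 3 * deriv^[2] f x * deriv^[4] f x)
    (hg : ∀ x ∈ s, DifferentiableAt 𝕜 g x ∧ DifferentiableAt 𝕜 (deriv g) x) :
    (∀ x ∈ s,
        12 * (deriv^[2] f x) ^ 2 * deriv^[2] g x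
          - 12 * deriv^[2] f x * deriv^[3] f x * deriv g x
          + (5 * (deriv^[3] f x) ^ 2 - 3 * deriv^[2] f x * deriv^[4] f x) * g x = 0) ↔
    ∃ a K : 𝕜, ∀ x ∈ s, g x = a + K * deriv f x := by
  constructor
  · intro hode
    have hwronskian : ∀ x ∈ s, deriv^[2] g x * deriv^[2] f x = deriv g x * deriv^[3] f x := by
      intro x hx
      have h := hode x hx
      rw [sub_eq_zero.mpr (hcoef x hx), zero_mul, add_zero] at h
      have h' : (12 * deriv^[2] f x) * (deriv^[2] g x * deriv^[2] f x
          - deriv g x * deriv^[3] f x) = 0 := by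
        linear_combination h
      exact sub_eq_zero.mp
        ((mul_eq_zero.mp h').resolve_left (mul_ne_zero (by norm_num) (hf0 x hx)))
    obtain ⟨K, hK⟩ := hs.exists_eq_const_mul_of_deriv_mul_eq hs'
      (fun x hx => (hg x hx).2.differentiableWithinAt) hf hf0 hwronskian
    -- `f'' ≠ 0` forces `deriv f` to be differentiable: `deriv` is `0` where it is not.
    have hKf : DifferentiableOn 𝕜 (fun y => K * deriv f y) s := fun x hx =>
      ((differentiableAt_of_deriv_ne_zero (hf0 x hx)).const_mul K).differentiableWithinAt
    obtain ⟨a, ha⟩ := hs.exists_eq_add_of_deriv_eq hs'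
      (fun x hx => (hg x hx).1.differentiableWithinAt) hKf fun x hx => by
        rw [deriv_const_mul_field', hK x hx]; rfl
    exact ⟨a, K, fun x hx => by rw [ha hx, add_comm]⟩
  · rintro ⟨a, K, hgK⟩ x hx
    have hg1 : EqOn (deriv g) (fun y => K * deriv^[2] f y) s := by
      intro y hy
      rw [(show EqOn g (fun y => a + K * deriv f y) s from hgK).deriv hs hy, deriv_const_add',
        deriv_const_mul_field']
      rfl
    have hg2 : deriv^[2] g x = K * deriv^[3] f x := by
      rw [Function.iterate_succ_apply', Function.iterate_one, hg1.deriv hs hx,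
        deriv_const_mul_field', Function.iterate_succ_apply' _ 2]
    rw [hg2, hg1 hx, sub_eq_zero.mpr (hcoef x hx)]
    ring

end Wronskian

namespace Real

theorem deriv_iterate_sqrt (k : ℕ) :
    deriv^[k] sqrt = fun x => (descPochhammer ℝ k).eval (1 / 2) * x ^ ((1 : ℝ) / 2 - k) := by
  ext x
  rw [show sqrt = fun x => x ^ ((1 : ℝ) / 2) from funext sqrt_eq_rpow, iter_deriv_rpow_const]

theorem deriv_sqrt_eq_rpow (x : ℝ) : deriv sqrt x = 2⁻¹ * x ^ (-(1 : ℝ) / 2) := by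
  rw [← Function.iterate_one deriv, deriv_iterate_sqrt]
  norm_num [descPochhammer_succ_right]

theorem differentiableOn_deriv_iterate_sqrt (k : ℕ) :
    DifferentiableOn ℝ (deriv^[k] sqrt) (Ioi 0) := by
  rw [deriv_iterate_sqrt]
  exact fun x hx => ((hasDerivAt_rpow_const (Or.inl (ne_of_gt hx))).differentiableAt.const_mul
    _).differentiableWithinAt

theorem deriv_iterate_two_sqrt_ne_zero {x : ℝ} (hx : 0 < x) : deriv^[2] sqrt x ≠ 0 := by
  rw [deriv_iterate_sqrt]
  norm_num [descPochhammer_succ_right]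
  exact (rpow_pos_of_pos hx _).ne'

theorem five_mul_sq_deriv_iterate_three_sqrt {x : ℝ} (hx : 0 < x) :
    5 * (deriv^[3] sqrt x) ^ 2 = 3 * deriv^[2] sqrt x * deriv^[4] sqrt x := by
  have hpow : x ^ ((1 : ℝ) / 2 - 2) * x ^ ((1 : ℝ) / 2 - 4) = (x ^ ((1 : ℝ) / 2 - 3)) ^ 2 := by
    rw [← rpow_add hx, ← rpow_natCast, ← rpow_mul hx.le]
    norm_num
  simp only [deriv_iterate_sqrt]
  norm_num [descPochhammer_succ_right] at hpow ⊢
  linear_combination (-45 / 64 : ℝ) * hpow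

end Real

/-- Theorem 6.1, case 3): for `f(x) = √x` on `(0,∞)`, a twice differentiable
`g` satisfies the second equation of system (sys1) iff
`g(x) = c₁ + c₂ x^{-1/2}`. -/
theorem one_var_admissible_sqrt (g : ℝ → ℝ)
    (hg : ∀ x ∈ Ioi (0 : ℝ), DifferentiableAt ℝ g x ∧ DifferentiableAt ℝ (deriv g) x) :
    (∀ x ∈ Ioi (0 : ℝ),
        12 * (deriv^[2] Real.sqrt x) ^ 2 * deriv^[2] g x
          - 12 * deriv^[2] Real.sqrt x * deriv^[3] Real.sqrt x * deriv g x
          + (5 * (deriv^[3] Real.sqrt x) ^ 2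
              - 3 * deriv^[2] Real.sqrt x * deriv^[4] Real.sqrt x) * g x = 0) ↔
    (∃ c₁ c₂ : ℝ, ∀ x ∈ Ioi (0 : ℝ),
        g x = c₁ + c₂ * x ^ (-(1 : ℝ) / 2)) := by
  rw [isOpen_Ioi.forall_eq_zero_iff_exists_eq_add_mul_deriv isPreconnected_Ioi
    (Real.differentiableOn_deriv_iterate_sqrt 2)
    (fun _ hx => Real.deriv_iterate_two_sqrt_ne_zero hx)
    (fun _ hx => Real.five_mul_sq_deriv_iterate_three_sqrt hx) hg]
  simp only [Real.deriv_sqrt_eq_rpow]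
  constructor
  · rintro ⟨a, K, h⟩
    exact ⟨a, K / 2, fun x hx => by rw [h x hx]; ring⟩
  · rintro ⟨c₁, c₂, h⟩
    exact ⟨c₁, 2 * c₂, fun x hx => by rw [h x hx]; ring⟩
end

section
/- Let 1 ≤ m ≤ n+1, let p₀, …, p_{n+1} be positive integers and r₀, …, r_{n+1} real numbers. Then the following are equivalent: (i) there exist a ≠ 0 and b ∈ ℝ such that for all sufficiently large real t, ∏_{i=0}^{m−1} Γ(p_i t + r_i) = a e^{bt} ∏_{i=m}^{n+1} Γ(p_i t + r_i); (ii) for every x ∈ ℝ, the number of indices i ∈ {0, …, m−1} with p_i x + r_i a nonpositive integer equals the number of indices i ∈ {m, …, n+1} with p_i x + r_i a nonpositive integer. -/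
/-!
Gauss's multiplication formula, which follows up to a constant from the Bohr–Mollerup theorem,
turns `Γ (p t + r)` into `∏_{j < p} Γ (t + (r + j) / p)` up to a factor `c e^{β t}`. So (i) says
that `∏_{s ∈ S_L} Γ (t + s)` and `∏_{s ∈ S_R} Γ (t + s)` agree up to such a factor, for the
multisets `S_L`, `S_R` of offsets `(r_i + j) / p_i`. Comparing `t` with `t + 1` gives the
polynomial identity `∏_{S_L} (t + s) = e^b ∏_{S_R} (t + s)`, whose roots force `S_L = S_R`.
On the other side, the poles of `Γ (p x + r)` are those of the `Γ (x + (r + j) / p)`, each once,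
so (ii) says that `S_L` and `S_R` have the same pole-counting function `N`; and a multiset is
recovered from `N` through `count y S = N (-y) - N (1 - y)`.
-/

open Finset Filter Polynomial Real

theorem ConvexOn.comp_add_div {f : ℝ → ℝ} (hf : ConvexOn ℝ (Set.Ioi 0) f) {c k : ℝ}
    (hc : 0 ≤ c) (hk : 0 < k) : ConvexOn ℝ (Set.Ioi 0) fun x => f ((x + c) / k) := by
  refine ⟨convex_Ioi 0, fun x (hx : 0 < x) y (hy : 0 < y) a b ha hb hab => ?_⟩
  have hmid : (a • x + b • y + c) / k = a • ((x + c) / k) + b • ((y + c) / k) := calc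
    (a • x + b • y + c) / k = (a * x + b * y + (a + b) * c) / k := by rw [hab, one_mul]; rfl
    _ = a • ((x + c) / k) + b • ((y + c) / k) := by simp only [smul_eq_mul]; ring
  simp only [hmid]
  exact hf.2 (show 0 < (x + c) / k by positivity) (show 0 < (y + c) / k by positivity) ha hb hab

theorem prod_Gamma_add_one_add_nat_div {k : ℕ} (hk : 0 < k) {x : ℝ} (hx : 0 < x) :
    ∏ j ∈ range k, Gamma ((x + 1 + j) / k) = x / k * ∏ j ∈ range k, Gamma ((x + j) / k) := by
  have hk' : (0 : ℝ) < k := by exact_mod_cast hk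
  have h := prod_range_succ' (fun j : ℕ => Gamma ((x + j) / k)) k
  have hlast : Gamma ((x + k) / k) = x / k * Gamma (x / k) := by
    rw [add_div, div_self hk'.ne', Gamma_add_one (by positivity)]
  rw [prod_range_succ, hlast, Nat.cast_zero, add_zero] at h
  have hΓ : 0 < Gamma (x / k) := Gamma_pos_of_pos (by positivity)
  calc ∏ j ∈ range k, Gamma ((x + 1 + j) / k)
      = ∏ j ∈ range k, Gamma ((x + (j + 1 : ℕ)) / k) := by
        refine prod_congr rfl fun j _ => ?_
        push_cast; ring_nf
    _ = x / k * ∏ j ∈ range k, Gamma ((x + j) / k) := by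
        refine mul_right_cancel₀ hΓ.ne' ?_
        rw [← h]; ring

theorem convexOn_log_prod_Gamma_add_nat_div {k : ℕ} (hk : 0 < k) :
    ConvexOn ℝ (Set.Ioi 0) fun x => log (∏ j ∈ range k, Gamma ((x + j) / k)) := by
  have hk' : (0 : ℝ) < k := by exact_mod_cast hk
  have hsum : ConvexOn ℝ (Set.Ioi 0) (∑ j ∈ range k, fun x => log (Gamma ((x + j) / k))) :=
    sum_induction _ (ConvexOn ℝ (Set.Ioi 0)) (fun _ _ => ConvexOn.add)
      (convexOn_const 0 (convex_Ioi 0))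
      fun j _ => convexOn_log_Gamma.comp_add_div (Nat.cast_nonneg j) hk'
  refine hsum.congr fun x (hx : 0 < x) => ?_
  rw [Finset.sum_apply, log_prod fun j _ => (Gamma_pos_of_pos (by positivity)).ne']

/-- Gauss's multiplication formula with an undetermined constant: by Bohr–Mollerup,
`k ^ (x - 1) * ∏ j < k, Γ ((x + j) / k)`, normalized to be `1` at `x = 1`, is `Γ x`. -/
theorem exists_Gamma_eq_mul_rpow_mul_prod {k : ℕ} (hk : 0 < k) :
    ∃ c : ℝ, 0 < c ∧ ∀ x : ℝ, 0 < x →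
      Gamma x = c * (k : ℝ) ^ x * ∏ j ∈ range k, Gamma ((x + j) / k) := by
  have hk' : (0 : ℝ) < k := by exact_mod_cast hk
  have hpos : ∀ x : ℝ, 0 < x → 0 < ∏ j ∈ range k, Gamma ((x + j) / k) := fun x hx =>
    prod_pos fun j _ => Gamma_pos_of_pos (by positivity)
  obtain ⟨c₀, hc₀, hc₀_def⟩ : ∃ c₀, 0 < c₀ ∧ c₀ = ∏ j ∈ range k, Gamma ((1 + j) / k) :=
    ⟨_, hpos 1 one_pos, rfl⟩
  let f : ℝ → ℝ := fun x => (k : ℝ) ^ (x - 1) * (∏ j ∈ range k, Gamma ((x + j) / k)) / c₀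
  have hf : Set.EqOn f Gamma (Set.Ioi 0) := by
    refine eq_Gamma_of_log_convex ?_ (fun {x} hx => ?_) (fun {x} hx => ?_) ?_
    · have hlin : ConvexOn ℝ (Set.Ioi 0) fun x : ℝ => log k * x :=
        (convexOn_id (convex_Ioi 0)).smul (log_nonneg (by exact_mod_cast hk))
      refine ((hlin.add (convexOn_log_prod_Gamma_add_nat_div hk)).add_const
        (-log k - log c₀)).congr fun x (hx : 0 < x) => ?_
      simp only [Function.comp_apply, Pi.add_apply, f]
      rw [log_div (mul_pos (rpow_pos_of_pos hk' _) (hpos x hx)).ne' hc₀.ne',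
        log_mul (rpow_pos_of_pos hk' _).ne' (hpos x hx).ne', log_rpow hk']
      ring
    · simp only [f, prod_Gamma_add_one_add_nat_div hk hx, add_sub_cancel_right]
      rw [rpow_sub_one hk'.ne']
      field_simp
    · exact div_pos (mul_pos (rpow_pos_of_pos hk' _) (hpos x hx)) hc₀
    · simp [f, ← hc₀_def, hc₀.ne']
  refine ⟨(k * c₀)⁻¹, by positivity, fun x hx => ?_⟩
  rw [← hf hx]
  simp only [f, rpow_sub_one hk'.ne']
  field_simp

def EqUpToExp (f g : ℝ → ℝ) : Prop :=
  ∃ a b : ℝ, a ≠ 0 ∧ ∀ᶠ t in atTop, f t = a * exp (b * t) * g t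

namespace EqUpToExp

variable {f f' g g' h : ℝ → ℝ}

theorem refl (f : ℝ → ℝ) : EqUpToExp f f :=
  ⟨1, 0, one_ne_zero, .of_forall fun t => by simp⟩

theorem symm (hfg : EqUpToExp f g) : EqUpToExp g f := by
  obtain ⟨a, b, ha, hab⟩ := hfg
  refine ⟨a⁻¹, -b, inv_ne_zero ha, hab.mono fun t ht => ?_⟩
  rw [ht, neg_mul, exp_neg]
  field_simp

theorem trans (hfg : EqUpToExp f g) (hgh : EqUpToExp g h) : EqUpToExp f h := by
  obtain ⟨a, b, ha, hab⟩ := hfg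
  obtain ⟨a', b', ha', hab'⟩ := hgh
  refine ⟨a * a', b + b', mul_ne_zero ha ha', (hab.and hab').mono fun t ht => ?_⟩
  rw [ht.1, ht.2, add_mul, exp_add]
  ring

theorem congr_iff (hf : EqUpToExp f f') (hg : EqUpToExp g g') :
    EqUpToExp f g ↔ EqUpToExp f' g' :=
  ⟨fun h => hf.symm.trans (h.trans hg), fun h => hf.trans (h.trans hg.symm)⟩

theorem mul (hf : EqUpToExp f f') (hg : EqUpToExp g g') :
    EqUpToExp (fun t => f t * g t) (fun t => f' t * g' t) := by
  obtain ⟨a, b, ha, hab⟩ := hf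
  obtain ⟨a', b', ha', hab'⟩ := hg
  refine ⟨a * a', b + b', mul_ne_zero ha ha', (hab.and hab').mono fun t ht => ?_⟩
  dsimp only
  rw [ht.1, ht.2, add_mul, exp_add]
  ring

theorem finset_prod {ι : Type*} {s : Finset ι} {f g : ι → ℝ → ℝ}
    (h : ∀ i ∈ s, EqUpToExp (f i) (g i)) :
    EqUpToExp (fun t => ∏ i ∈ s, f i t) (fun t => ∏ i ∈ s, g i t) := by
  induction s using Finset.cons_induction with
  | empty => simpa using refl fun _ => 1
  | cons i s hi ih =>
    simp only [prod_cons]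
    exact (h i (mem_cons_self i s)).mul (ih fun j hj => h j (mem_cons_of_mem hj))

end EqUpToExp

noncomputable def gammaProd (S : Multiset ℝ) (t : ℝ) : ℝ :=
  (S.map fun s => Gamma (t + s)).prod

theorem eventually_forall_mem_add_pos (S : Multiset ℝ) : ∀ᶠ t in atTop, ∀ s ∈ S, 0 < t + s := by
  filter_upwards [S.toFinset.eventually_all.2 fun s _ => eventually_gt_atTop (-s)] with t ht s hs
  linarith [ht s (Multiset.mem_toFinset.2 hs)]

theorem gammaProd_ne_zero {S : Multiset ℝ} {t : ℝ} (h : ∀ s ∈ S, 0 < t + s) :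
    gammaProd S t ≠ 0 := by
  refine Multiset.prod_ne_zero fun h0 => ?_
  obtain ⟨s, hs, hΓ⟩ := Multiset.mem_map.1 h0
  exact (Gamma_pos_of_pos (h s hs)).ne' hΓ

theorem gammaProd_add_one {S : Multiset ℝ} {t : ℝ} (h : ∀ s ∈ S, 0 < t + s) :
    gammaProd S (t + 1) = (S.map fun s => t + s).prod * gammaProd S t := by
  rw [gammaProd, gammaProd, ← Multiset.prod_map_mul]
  refine congrArg _ (Multiset.map_congr rfl fun s hs => ?_)
  rw [add_right_comm, Gamma_add_one (h s hs).ne']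

theorem Polynomial.eq_of_eventually_eval_eq {p q : ℝ[X]}
    (h : ∀ᶠ t in atTop, eval t p = eval t q) : p = q :=
  eq_of_infinite_eval_eq p q
    (frequently_cofinite_iff_infinite.1 (h.frequently.filter_mono atTop_le_cofinite))

theorem Polynomial.eval_multiset_prod_X_add_C (S : Multiset ℝ) (t : ℝ) :
    eval t (S.map fun s => X + C s).prod = (S.map fun s => t + s).prod := by
  simp [eval_multiset_prod, Multiset.map_map]

theorem Polynomial.roots_multiset_prod_X_add_C (S : Multiset ℝ) :
    (S.map fun s => X + C s).prod.roots = S.map Neg.neg := by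
  simpa [Multiset.map_map, Function.comp_def, sub_eq_add_neg] using
    roots_multiset_prod_X_sub_C (S.map Neg.neg)

theorem eq_of_eqUpToExp_gammaProd {S S' : Multiset ℝ}
    (h : EqUpToExp (gammaProd S) (gammaProd S')) : S = S' := by
  obtain ⟨a, b, ha, hab⟩ := h
  have hpoly : ∀ᶠ t in atTop, eval t (S.map fun s => X + C s).prod
      = eval t (C (exp b) * (S'.map fun s => X + C s).prod) := by
    filter_upwards [hab, (tendsto_atTop_add_const_right atTop 1 tendsto_id).eventually hab,
      eventually_forall_mem_add_pos S, eventually_forall_mem_add_pos S'] with t h₀ h₁ hS hS'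
    dsimp only [id] at h₁
    rw [gammaProd_add_one hS, gammaProd_add_one hS', h₀, mul_add, exp_add, mul_one] at h₁
    rw [eval_mul, eval_C, eval_multiset_prod_X_add_C, eval_multiset_prod_X_add_C]
    refine mul_right_cancel₀ (mul_ne_zero (mul_ne_zero ha (exp_ne_zero (b * t)))
      (gammaProd_ne_zero hS')) ?_
    linear_combination h₁
  have hroots := congrArg roots (Polynomial.eq_of_eventually_eval_eq hpoly)
  rw [roots_C_mul _ (exp_ne_zero b), roots_multiset_prod_X_add_C,
    roots_multiset_prod_X_add_C] at hroots
  exact Multiset.map_injective neg_injective hroots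

theorem eqUpToExp_gammaProd_iff {S S' : Multiset ℝ} :
    EqUpToExp (gammaProd S) (gammaProd S') ↔ S = S' :=
  ⟨eq_of_eqUpToExp_gammaProd, fun h => h ▸ .refl _⟩

noncomputable def gammaOffsets (P : ℕ) (ρ : ℝ) : Multiset ℝ :=
  (Multiset.range P).map fun j : ℕ => (ρ + j) / P

noncomputable def poleOffsets {ι : Type*} (p : ι → ℕ) (r : ι → ℝ) (F : Finset ι) :
    Multiset ℝ :=
  F.val.bind fun i => gammaOffsets (p i) (r i)

theorem eqUpToExp_Gamma_mul_add {P : ℕ} (hP : 0 < P) (ρ : ℝ) :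
    EqUpToExp (fun t => Gamma (P * t + ρ)) (gammaProd (gammaOffsets P ρ)) := by
  obtain ⟨c, hc, hGamma⟩ := exists_Gamma_eq_mul_rpow_mul_prod hP
  have hP' : (0 : ℝ) < P := by exact_mod_cast hP
  refine ⟨c * P ^ ρ, P * log P, (mul_pos hc (rpow_pos_of_pos hP' ρ)).ne', ?_⟩
  have harg : Tendsto (fun t : ℝ => P * t + ρ) atTop atTop :=
    tendsto_atTop_add_const_right _ ρ (tendsto_id.const_mul_atTop hP')
  filter_upwards [harg.eventually_gt_atTop 0] with t ht
  have hexp : exp (log P * (P * t + ρ)) = exp (log P * ρ) * exp (P * log P * t) := by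
    rw [← exp_add]; ring_nf
  rw [hGamma _ ht, rpow_def_of_pos hP', rpow_def_of_pos hP', hexp]
  have hprod : ∏ j ∈ range P, Gamma ((P * t + ρ + j) / P) = gammaProd (gammaOffsets P ρ) t := by
    rw [gammaProd, gammaOffsets, Multiset.map_map]
    change _ = ∏ j ∈ range P, Gamma (t + (ρ + j) / P)
    refine prod_congr rfl fun j _ => ?_
    congr 1
    field_simp
    ring
  rw [hprod]
  ring

theorem gammaProd_poleOffsets {ι : Type*} (p : ι → ℕ) (r : ι → ℝ) (F : Finset ι) (t : ℝ) :
    gammaProd (poleOffsets p r F) t = ∏ i ∈ F, gammaProd (gammaOffsets (p i) (r i)) t := by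
  rw [gammaProd, poleOffsets, Multiset.map_bind, Multiset.prod_bind]
  rfl

theorem eqUpToExp_prod_Gamma_poleOffsets {ι : Type*} {p : ι → ℕ} {F : Finset ι}
    (hp : ∀ i ∈ F, 0 < p i) (r : ι → ℝ) :
    EqUpToExp (fun t => ∏ i ∈ F, Gamma (p i * t + r i)) (gammaProd (poleOffsets p r F)) := by
  rw [funext (gammaProd_poleOffsets p r F)]
  exact EqUpToExp.finset_prod fun i hi => eqUpToExp_Gamma_mul_add (hp i hi) (r i)

def IsNonposInt (y : ℝ) : Prop :=
  ∃ k : ℕ, y = -k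

theorem isNonposInt_iff_eq_zero_or_add_one {y : ℝ} :
    IsNonposInt y ↔ y = 0 ∨ IsNonposInt (y + 1) := by
  constructor
  · rintro ⟨_ | k, rfl⟩
    · simp
    · exact Or.inr ⟨k, by push_cast; ring⟩
  · rintro (rfl | ⟨k, hk⟩)
    · exact ⟨0, by simp⟩
    · exact ⟨k + 1, by push_cast; linarith⟩

theorem not_isNonposInt_one : ¬IsNonposInt 1 := by
  rintro ⟨k, hk⟩
  linarith [(Nat.cast_nonneg k : (0 : ℝ) ≤ k)]

open Classical in
noncomputable def poleCount (S : Multiset ℝ) (x : ℝ) : ℕ :=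
  S.countP fun s => IsNonposInt (x + s)

theorem poleCount_eq_count_add_poleCount_add_one (S : Multiset ℝ) (x : ℝ) :
    poleCount S x = S.count (-x) + poleCount S (x + 1) := by
  induction S using Multiset.induction_on with
  | empty => simp [poleCount]
  | cons s S ih =>
    simp only [poleCount, Multiset.countP_cons, Multiset.count_cons] at ih ⊢
    rw [ih]
    by_cases hs : s = -x
    · subst hs
      have h1 : ¬IsNonposInt (x + 1 + -x) := by
        rw [show x + 1 + -x = 1 by ring]; exact not_isNonposInt_one
      have h0 : IsNonposInt (x + -x) := ⟨0, by simp⟩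
      rw [if_pos h0, if_neg h1, if_pos rfl]
      ring
    · have hiff : IsNonposInt (x + s) ↔ IsNonposInt (x + 1 + s) := by
        rw [isNonposInt_iff_eq_zero_or_add_one, add_right_comm]
        exact or_iff_right fun h => hs (by linarith)
      rw [if_neg (Ne.symm hs), ← hiff]
      split_ifs <;> ring

theorem eq_iff_forall_poleCount_eq {S S' : Multiset ℝ} :
    S = S' ↔ ∀ x, poleCount S x = poleCount S' x := by
  refine ⟨fun h _ => h ▸ rfl, fun h => Multiset.ext.2 fun y => ?_⟩
  have h₀ := h (-y)
  rw [poleCount_eq_count_add_poleCount_add_one, poleCount_eq_count_add_poleCount_add_one S',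
    neg_neg, h] at h₀
  omega

theorem poleCount_bind {α : Type*} (s : Multiset α) (f : α → Multiset ℝ) (x : ℝ) :
    poleCount (s.bind f) x = (s.map fun a => poleCount (f a) x).sum := by
  induction s using Multiset.induction_on with
  | empty => simp [poleCount]
  | cons a s ih =>
    simp only [poleCount] at ih ⊢
    rw [Multiset.cons_bind, Multiset.countP_add, ih, Multiset.map_cons, Multiset.sum_cons]

theorem isNonposInt_add_div_iff {P : ℕ} (hP : 0 < P) (x ρ : ℝ) (j : ℕ) :
    IsNonposInt (x + (ρ + j) / P) ↔ ∃ l : ℕ, P * x + ρ = -((j + P * l : ℕ) : ℝ) := by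
  have hP' : (P : ℝ) ≠ 0 := by positivity
  refine exists_congr fun l => ?_
  rw [← mul_right_inj' hP', mul_add, mul_div_cancel₀ _ hP']
  push_cast
  constructor <;> intro h <;> linarith

open Classical in
theorem poleCount_gammaOffsets {P : ℕ} (hP : 0 < P) (ρ x : ℝ) :
    poleCount (gammaOffsets P ρ) x = if IsNonposInt (P * x + ρ) then 1 else 0 := by
  rw [poleCount, gammaOffsets, Multiset.countP_map]
  change #{j ∈ range P | IsNonposInt (x + (ρ + (j : ℕ)) / P)} = _
  split_ifs with h
  · obtain ⟨k, hk⟩ := h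
    refine card_eq_one.2 ⟨k % P, ext fun j => ?_⟩
    simp only [mem_filter, mem_range, mem_singleton, isNonposInt_add_div_iff hP, hk, neg_inj,
      Nat.cast_inj]
    constructor
    · rintro ⟨hj, l, rfl⟩
      rw [Nat.add_mul_mod_self_left, Nat.mod_eq_of_lt hj]
    · rintro rfl
      exact ⟨Nat.mod_lt _ hP, k / P, (Nat.mod_add_div k P).symm⟩
  · refine card_eq_zero.2 (filter_eq_empty_iff.2 fun j _ hj => h ?_)
    obtain ⟨l, hl⟩ := (isNonposInt_add_div_iff hP x ρ j).1 hj
    exact ⟨_, hl⟩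

open Classical in
theorem poleCount_poleOffsets {ι : Type*} {p : ι → ℕ} {F : Finset ι} (hp : ∀ i ∈ F, 0 < p i)
    (r : ι → ℝ) (x : ℝ) :
    poleCount (poleOffsets p r F) x = #{i ∈ F | IsNonposInt (p i * x + r i)} := by
  rw [poleOffsets, poleCount_bind, card_filter]
  exact sum_congr rfl fun i hi => poleCount_gammaOffsets (hp i hi) (r i) x

theorem gamma_identity_iff_pole_matching_general (n m : ℕ)
    (p : Fin (n + 2) → ℕ) (hp : ∀ i, 0 < p i) (r : Fin (n + 2) → ℝ) :
    (∃ a b : ℝ, a ≠ 0 ∧ ∃ T : ℝ, ∀ t : ℝ, T ≤ t →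
      ∏ i ∈ Finset.univ.filter (fun i : Fin (n + 2) => (i : ℕ) < m),
          Real.Gamma ((p i : ℝ) * t + r i)
        = a * Real.exp (b * t) *
          ∏ i ∈ Finset.univ.filter (fun i : Fin (n + 2) => m ≤ (i : ℕ)),
            Real.Gamma ((p i : ℝ) * t + r i)) ↔
    (∀ x : ℝ,
      Nat.card {i : Fin (n + 2) //
          (i : ℕ) < m ∧ ∃ k : ℕ, (p i : ℝ) * x + r i = -(k : ℝ)}
        = Nat.card {i : Fin (n + 2) //
            m ≤ (i : ℕ) ∧ ∃ k : ℕ, (p i : ℝ) * x + r i = -(k : ℝ)}) := by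
  classical
  have hcard : ∀ (Q : Fin (n + 2) → Prop) [DecidablePred Q] (x : ℝ),
      Nat.card {i // Q i ∧ ∃ k : ℕ, (p i : ℝ) * x + r i = -(k : ℝ)}
        = poleCount (poleOffsets p r (univ.filter Q)) x := by
    intro Q _ x
    rw [poleCount_poleOffsets fun i _ => hp i, Nat.card_eq_fintype_card, Fintype.card_subtype,
      filter_filter]
    rfl
  have key := (eqUpToExp_prod_Gamma_poleOffsets
    (F := univ.filter fun i : Fin (n + 2) => (i : ℕ) < m) (fun i _ => hp i) r).congr_iff
    (eqUpToExp_prod_Gamma_poleOffsets (F := univ.filter fun i : Fin (n + 2) => m ≤ (i : ℕ))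
      (fun i _ => hp i) r)
  rw [eqUpToExp_gammaProd_iff, eq_iff_forall_poleCount_eq] at key
  simp only [EqUpToExp, eventually_atTop] at key
  refine key.trans (forall_congr' fun x => ?_)
  rw [hcard (fun i => (i : ℕ) < m), hcard (fun i => m ≤ (i : ℕ))]

/-- Remark 5.8.1: the Gamma-function identity (gam) of Theorem 5.8.1 holds
iff the multisets of poles of the two products of Gamma factors coincide. -/
theorem gamma_identity_iff_pole_matching (n m : ℕ) (hm : 1 ≤ m) (hm' : m ≤ n + 1)
    (p : Fin (n + 2) → ℕ) (hp : ∀ i, 0 < p i) (r : Fin (n + 2) → ℝ) :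
    (∃ a b : ℝ, a ≠ 0 ∧ ∃ T : ℝ, ∀ t : ℝ, T ≤ t →
      ∏ i ∈ Finset.univ.filter (fun i : Fin (n + 2) => (i : ℕ) < m),
          Real.Gamma ((p i : ℝ) * t + r i)
        = a * Real.exp (b * t) *
          ∏ i ∈ Finset.univ.filter (fun i : Fin (n + 2) => m ≤ (i : ℕ)),
            Real.Gamma ((p i : ℝ) * t + r i)) ↔
    (∀ x : ℝ,
      Nat.card {i : Fin (n + 2) //
          (i : ℕ) < m ∧ ∃ k : ℕ, (p i : ℝ) * x + r i = -(k : ℝ)}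
        = Nat.card {i : Fin (n + 2) //
            m ≤ (i : ℕ) ∧ ∃ k : ℕ, (p i : ℝ) * x + r i = -(k : ℝ)}) :=
  gamma_identity_iff_pole_matching_general n m p hp r
end

section
/- Let n ≥ 1 and let r₀, …, r_n, r_{n+1} be real numbers. Then there exist a ≠ 0 and b ∈ ℝ such that for all sufficiently large real t, ∏_{i=0}^{n} Γ(t + r_i) = a e^{bt} Γ((n+1)t + r_{n+1}), if and only if there exist u ∈ ℝ and a permutation σ of {0, 1, …, n} such that r_i = u + σ(i)/(n+1) for every i ∈ {0, …, n} and r_{n+1} = (n+1)u. -/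
/-!
For `⇐`, Gauss's multiplication formula `∏_{k<m} Γ(x + k/m) = C_m m^{1 - m x} Γ(m x)` is the
whole identity. It follows from the Bohr–Mollerup theorem: with `C_m = ∏_{k<m} Γ((1 + k)/m)`,
the function `F y = C_m⁻¹ m^{y-1} ∏_{k<m} Γ((y + k)/m)` is log-convex on `(0, ∞)` and satisfies
`F (y + 1) = y F y` and `F 1 = 1`, so `F = Γ` there.

For `⇒`, dividing the identity at `t + 1` by the identity at `t` cancels all Gamma factors
and leaves the polynomial identity `∏ᵢ (t + rᵢ) = e^b ∏_{k ≤ n} ((n+1) t + s + k)`.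
Both sides are monic up to a constant, so the roots agree with multiplicity:
the `rᵢ` are the numbers `(s + k)/(n+1)` in some order.
-/

open Finset Filter

theorem Equiv.Perm.exists_eq_comp_of_map_univ_eq {ι α : Type*} [Fintype ι]
    [DecidableEq α] {r e : ι → α} (h : univ.val.map r = univ.val.map e) :
    ∃ σ : Equiv.Perm ι, r = e ∘ σ := by
  have hcard (c : α) : Fintype.card {i // r i = c} = Fintype.card {i // e i = c} := by
    simpa [Fintype.card_subtype, Multiset.count_map, Finset.card_def, eq_comm] using
      congrArg (Multiset.count c) h
  exact ⟨Equiv.ofFiberEquiv fun c => Fintype.equivOfCardEq (hcard c),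
    funext fun i => (Equiv.ofFiberEquiv_map _ i).symm⟩

open Polynomial in
theorem map_univ_eq_of_eventually_prod_add_eq {ι : Type*} [Fintype ι] {r e : ι → ℝ} {c : ℝ}
    (h : ∀ᶠ t in atTop, ∏ i, (t + r i) = c * ∏ i, (t + e i)) :
    univ.val.map r = univ.val.map e := by
  let P : (ι → ℝ) → ℝ[X] := fun a => ∏ i, (X - C (-a i))
  have hmonic (a : ι → ℝ) : (P a).Monic := monic_prod_of_monic _ _ fun i _ => monic_X_sub_C _
  have hroots (a : ι → ℝ) : (P a).roots = univ.val.map (fun i => -a i) := by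
    rw [← roots_multiset_prod_X_sub_C (univ.val.map fun i => -a i), Multiset.map_map]
    rfl
  have hPQ : P r = C c * P e := by
    obtain ⟨T, hT⟩ := eventually_atTop.mp h
    refine eq_of_infinite_eval_eq _ _ ((Set.Ici_infinite T).mono fun t ht => ?_)
    simp [P, eval_prod, hT t ht]
  have hc : c = 1 := by
    simpa [(hmonic r).leadingCoeff, (hmonic e).leadingCoeff] using
      (congrArg leadingCoeff hPQ).symm
  rw [hc, C_1, one_mul] at hPQ
  simpa [hroots, Multiset.map_map] using congrArg (fun p => p.roots.map Neg.neg) hPQ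

theorem ConvexOn.comp_mul_add {s : Set ℝ} {f : ℝ → ℝ} (hf : ConvexOn ℝ s f) (c d : ℝ) :
    ConvexOn ℝ ((fun x => c * x + d) ⁻¹' s) (fun x => f (c * x + d)) :=
  hf.comp_affineMap ⟨fun x => c * x + d, LinearMap.mulLeft ℝ c, fun x v => by
    simp only [vadd_eq_add, LinearMap.mulLeft_apply]; ring⟩

theorem prod_range_mul_add_nat_eq {m : ℕ} (hm : 0 < m) (t u : ℝ) :
    ∏ k ∈ range m, (m * t + m * u + k) =
      (m : ℝ) ^ m * ∏ k : Fin m, (t + (u + (k : ℕ) / m)) := by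
  have hm' : (m : ℝ) ≠ 0 := Nat.cast_ne_zero.mpr hm.ne'
  rw [← Fin.prod_univ_eq_prod_range, ← Fin.prod_const, ← prod_mul_distrib]
  exact prod_congr rfl fun k _ => by field_simp; ring

namespace Real

open Set

theorem Gamma_add_nat_eq_prod_mul {x : ℝ} (hx : ∀ k : ℕ, x + k ≠ 0) (m : ℕ) :
    Gamma (x + m) = (∏ k ∈ range m, (x + k)) * Gamma x := by
  induction m with
  | zero => simp
  | succ m ih =>
    rw [Nat.cast_succ, ← add_assoc, Gamma_add_one (hx m), ih, prod_range_succ]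
    ring

variable {m : ℕ}

theorem prod_Gamma_add_one_add_div (hm : 0 < m) {y : ℝ} (hy : 0 < y) :
    ∏ k ∈ range m, Gamma ((y + 1 + k) / m) =
      y / m * ∏ k ∈ range m, Gamma ((y + k) / m) := by
  set f : ℕ → ℝ := fun k => Gamma ((y + k) / m)
  have hm' : (0 : ℝ) < m := Nat.cast_pos.mpr hm
  have hshift : ∏ k ∈ range m, Gamma ((y + 1 + k) / m) = ∏ k ∈ range m, f (k + 1) :=
    prod_congr rfl fun k _ => by simp only [f]; push_cast; ring_nf
  have hlast : f m = y / m * f 0 := by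
    simp only [f, Nat.cast_zero, add_zero]
    rw [add_div, div_self hm'.ne', Gamma_add_one (by positivity)]
  have hf0 : f 0 ≠ 0 :=
    (Gamma_pos_of_pos (by simp only [Nat.cast_zero, add_zero]; positivity)).ne'
  apply mul_right_cancel₀ hf0
  rw [hshift, ← prod_range_succ', prod_range_succ, hlast]
  ring

theorem convexOn_sum_log_Gamma_add_div (hm : 0 < m) :
    ConvexOn ℝ (Ioi 0) fun y => ∑ k ∈ range m, log (Gamma ((y + k) / m)) := by
  have hm' : (0 : ℝ) < m := Nat.cast_pos.mpr hm
  have hterm (k : ℕ) : ConvexOn ℝ (Ioi 0) fun y => log (Gamma ((y + k) / m)) := by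
    have hsub : Ioi (0 : ℝ) ⊆ (fun y => (m : ℝ)⁻¹ * y + k / m) ⁻¹' Ioi 0 := fun y (hy : 0 < y) =>
      show 0 < (m : ℝ)⁻¹ * y + k / m by positivity
    refine ((convexOn_log_Gamma.comp_mul_add (m : ℝ)⁻¹ (k / m)).subset hsub (convex_Ioi 0)).congr
      fun y _ => ?_
    simp only [Function.comp_apply]
    ring_nf
  simpa [Finset.sum_fn] using
    Finset.sum_induction _ (ConvexOn ℝ (Ioi 0)) (fun _ _ => ConvexOn.add)
      (convexOn_const 0 (convex_Ioi 0)) fun k _ => hterm k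

theorem prod_Gamma_add_nat_div (hm : 0 < m) {x : ℝ} (hx : 0 < x) :
    ∏ k ∈ range m, Gamma (x + k / m) =
      (∏ k ∈ range m, Gamma ((1 + k) / m)) * (m : ℝ) ^ (1 - m * x) * Gamma (m * x) := by
  have hm' : (0 : ℝ) < m := Nat.cast_pos.mpr hm
  have hprod_pos {y : ℝ} (hy : 0 < y) : 0 < ∏ k ∈ range m, Gamma ((y + k) / m) :=
    prod_pos fun k _ => Gamma_pos_of_pos (by positivity)
  set C := ∏ k ∈ range m, Gamma ((1 + k) / m)
  have hC : 0 < C := hprod_pos one_pos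
  set F : ℝ → ℝ := fun y => (∏ k ∈ range m, Gamma ((y + k) / m)) * (m : ℝ) ^ (y - 1) / C
  have hF_pos {y : ℝ} (hy : 0 < y) : 0 < F y := by
    have := hprod_pos hy
    positivity
  have hF_feq {y : ℝ} (hy : 0 < y) : F (y + 1) = y * F y := by
    simp only [F, prod_Gamma_add_one_add_div hm hy, add_sub_cancel_right]
    rw [rpow_sub hm', rpow_one]
    field_simp
  have hF_one : F 1 = 1 := by
    simp only [F, sub_self, rpow_zero, mul_one]
    exact div_self hC.ne'
  have hF_conv : ConvexOn ℝ (Ioi 0) (log ∘ F) := by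
    have haffine := (LinearMap.mulLeft ℝ (log m)).convexOn (convex_Ioi 0) |>.add_const
      (-log m - log C)
    refine ((convexOn_sum_log_Gamma_add_div hm).add haffine).congr ?_
    intro y hy
    have hne : ∀ k ∈ range m, Gamma ((y + k) / m) ≠ 0 := fun k _ =>
      (Gamma_pos_of_pos (by have : (0 : ℝ) < y := hy; positivity)).ne'
    simp only [F, Function.comp_apply, Pi.add_apply, LinearMap.mulLeft_apply]
    rw [log_div (mul_pos (hprod_pos hy) (rpow_pos_of_pos hm' _)).ne' hC.ne',
      log_mul (hprod_pos hy).ne' (by positivity), log_prod hne, log_rpow hm']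
    ring
  have h := eq_Gamma_of_log_convex hF_conv hF_feq hF_pos hF_one (show 0 < m * x by positivity)
  have harg (k : ℕ) : (m * x + k) / m = x + k / m := by field_simp
  simp only [F, harg] at h
  calc ∏ k ∈ range m, Gamma (x + k / m)
      = (∏ k ∈ range m, Gamma (x + k / m)) * (m : ℝ) ^ (m * x - 1) / C * C *
          (m : ℝ) ^ (1 - m * x) := by
        rw [div_mul_cancel₀ _ hC.ne', mul_assoc, ← rpow_add hm']
        simp
    _ = C * (m : ℝ) ^ (1 - m * x) * Gamma (m * x) := by rw [h]; ring

theorem exists_prod_Gamma_add_div_eq_mul_exp_mul_Gamma (hm : 0 < m) (u : ℝ) :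
    ∃ a b : ℝ, a ≠ 0 ∧ ∀ t, 0 < t + u →
      ∏ k ∈ range m, Gamma (t + u + k / m) = a * exp (b * t) * Gamma (m * t + m * u) := by
  have hm' : (0 : ℝ) < m := Nat.cast_pos.mpr hm
  set C := ∏ k ∈ range m, Gamma ((1 + k) / m)
  refine ⟨C * (m : ℝ) ^ (1 - m * u), -(m * log m), by positivity, fun t ht => ?_⟩
  rw [prod_Gamma_add_nat_div hm ht, show 1 - m * (t + u) = 1 - m * u + -(m * t) by ring,
    rpow_add hm', rpow_def_of_pos hm' (-_), show log m * -(m * t) = -(m * log m) * t by ring,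
    mul_add]
  ring

end Real

open Real in
theorem eventually_prod_add_eq_of_prod_Gamma_eq {ι : Type*} [Fintype ι] {r : ι → ℝ} {m : ℕ}
    (hm : 0 < m) {s a b : ℝ} (ha : a ≠ 0)
    (h : ∀ᶠ t in atTop, ∏ i, Gamma (t + r i) = a * exp (b * t) * Gamma (m * t + s)) :
    ∀ᶠ t in atTop, ∏ i, (t + r i) = exp b * ∏ k ∈ range m, (m * t + s + k) := by
  have hm' : (0 : ℝ) < m := Nat.cast_pos.mpr hm
  have hpos_r : ∀ᶠ t in atTop, ∀ i, 0 < t + r i :=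
    eventually_all.2 fun i => (eventually_gt_atTop (-r i)).mono fun t ht => by linarith
  have hpos_s : ∀ᶠ t in atTop, 0 < m * t + s :=
    (tendsto_atTop_add_const_right atTop s (tendsto_id.const_mul_atTop hm')).eventually_gt_atTop 0
  filter_upwards [h, (tendsto_atTop_add_const_right atTop 1 tendsto_id).eventually h, hpos_r,
    hpos_s] with t ht ht1 hr hs
  have hleft : ∏ i, Gamma (t + 1 + r i) = (∏ i, (t + r i)) * ∏ i, Gamma (t + r i) := by
    rw [← prod_mul_distrib]
    exact prod_congr rfl fun i _ => by rw [add_right_comm, Gamma_add_one (hr i).ne']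
  have hright :
      Gamma (m * (t + 1) + s) = (∏ k ∈ range m, (m * t + s + k)) * Gamma (m * t + s) := by
    rw [show m * (t + 1) + s = m * t + s + m by ring,
      Gamma_add_nat_eq_prod_mul fun k => by positivity]
  simp only [id_eq] at ht1
  rw [hleft, ht, hright, mul_add, mul_one, exp_add] at ht1
  have hne : a * exp (b * t) * Gamma (m * t + s) ≠ 0 :=
    mul_ne_zero (mul_ne_zero ha (exp_pos _).ne') (Gamma_pos_of_pos hs).ne'
  apply mul_right_cancel₀ hne
  linear_combination ht1

theorem gamma_identity_gauss_multiplication_general (n : ℕ)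
    (r : Fin (n + 1) → ℝ) (s : ℝ) :
    (∃ a b : ℝ, a ≠ 0 ∧ ∃ T : ℝ, ∀ t : ℝ, T ≤ t →
      ∏ i : Fin (n + 1), Real.Gamma (t + r i)
        = a * Real.exp (b * t) * Real.Gamma ((n + 1) * t + s)) ↔
    (∃ u : ℝ, ∃ σ : Equiv.Perm (Fin (n + 1)),
      (∀ i, r i = u + ((σ i : ℕ) : ℝ) / (n + 1)) ∧ s = (n + 1) * u) := by
  constructor
  · rintro ⟨a, b, ha, T, hT⟩
    obtain ⟨u, rfl⟩ : ∃ u, s = (n + 1) * u := ⟨s / (n + 1), by field_simp⟩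
    have hpoly := eventually_prod_add_eq_of_prod_Gamma_eq (m := n + 1) (by positivity) ha
      (eventually_atTop.2 ⟨T, by push_cast; exact hT⟩)
    have hexpand := prod_range_mul_add_nat_eq (m := n + 1) (by positivity)
    push_cast at hpoly hexpand
    have hroots : ∀ᶠ t in atTop, ∏ i, (t + r i) =
        Real.exp b * (n + 1) ^ (n + 1) * ∏ k : Fin (n + 1), (t + (u + (k : ℕ) / (n + 1))) :=
      hpoly.mono fun t ht => by rw [ht, hexpand, mul_assoc]
    obtain ⟨σ, hσ⟩ := Equiv.Perm.exists_eq_comp_of_map_univ_eq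
      (map_univ_eq_of_eventually_prod_add_eq hroots)
    exact ⟨u, σ, fun i => congrFun hσ i, rfl⟩
  · rintro ⟨u, σ, hr, rfl⟩
    obtain ⟨a, b, ha, h⟩ := Real.exists_prod_Gamma_add_div_eq_mul_exp_mul_Gamma (m := n + 1)
      (by positivity) u
    refine ⟨a, b, ha, 1 - u, fun t ht => ?_⟩
    push_cast at h
    rw [← h t (by linarith)]
    simp_rw [hr, ← add_assoc]
    rw [Equiv.prod_comp σ (fun i => Real.Gamma (t + u + ((i : ℕ) : ℝ) / (n + 1))),
      Fin.prod_univ_eq_prod_range (fun k => Real.Gamma (t + u + (k : ℝ) / (n + 1)))]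

/-- Examples 5.8.1 / 5.8.2: the Gamma identity
`∏_{i=0}^n Γ(t + rᵢ) = a e^{bt} Γ((n+1)t + s)` holds (for large `t`) iff the
vector `(r₀,…,r_n; s)` is a Gauss multiplication vector, i.e.
`rᵢ = u + σ(i)/(n+1)` for a permutation `σ` and `s = (n+1)u`. -/
theorem gamma_identity_gauss_multiplication (n : ℕ) (hn : 1 ≤ n)
    (r : Fin (n + 1) → ℝ) (s : ℝ) :
    (∃ a b : ℝ, a ≠ 0 ∧ ∃ T : ℝ, ∀ t : ℝ, T ≤ t →
      ∏ i : Fin (n + 1), Real.Gamma (t + r i)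
        = a * Real.exp (b * t) * Real.Gamma ((n + 1) * t + s)) ↔
    (∃ u : ℝ, ∃ σ : Equiv.Perm (Fin (n + 1)),
      (∀ i, r i = u + ((σ i : ℕ) : ℝ) / (n + 1)) ∧ s = (n + 1) * u) :=
  gamma_identity_gauss_multiplication_general n r s
end

section
/- Let r₀, r₁, r₂, r₃ be real numbers. Then there exist a ≠ 0 and b ∈ ℝ such that for all sufficiently large real t, Γ(t + r₀) Γ(t + r₁) Γ(2t + r₂) = a e^{bt} Γ(4t + r₃), if and only if there exists u ∈ ℝ such that either ({r₀, r₁} = {u, u + 1/2} as multisets, r₂ = 2u + 1/2, r₃ = 4u) or ({r₀, r₁} = {u + 1/4, u + 3/4} as multisets, r₂ = 2u, r₃ = 4u). -/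
open Real

private lemma pair_iff_aux (a b c d : ℝ) :
    ({a, b} : Multiset ℝ) = {c, d} ↔ (a = c ∧ b = d) ∨ (a = d ∧ b = c) := by
  constructor
  · intro h
    rcases Multiset.cons_eq_cons.1 h with ⟨h1, h2⟩ | ⟨hne, cs, h1, h2⟩
    · exact Or.inl ⟨h1, Multiset.singleton_inj.1 h2⟩
    · have hcs : cs = 0 := by
        have := congrArg Multiset.card h1
        simpa using this.symm
      subst hcs
      simp only [Multiset.cons_zero, Multiset.singleton_inj] at h1 h2
      exact Or.inr ⟨h2.symm, h1⟩
  · rintro (⟨h1, h2⟩ | ⟨h1, h2⟩) <;> subst h1 <;> subst h2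
    · rfl
    · exact Multiset.cons_swap _ _ _

private lemma gamma_case1 (u t : ℝ) :
    Real.Gamma (t + u) * Real.Gamma (t + (u + 1/2)) * Real.Gamma (2 * t + (2*u + 1/2))
      = (π * (2:ℝ) ^ (2 - 6*u)) * Real.exp ((-6 * Real.log 2) * t) * Real.Gamma (4 * t + 4*u) := by
  have h1 := Real.Gamma_mul_Gamma_add_half (t + u)
  have h2 := Real.Gamma_mul_Gamma_add_half (2 * (t + u))
  have e1 : t + (u + 1/2) = (t + u) + 1/2 := by ring
  have e2 : 2 * t + (2*u + 1/2) = 2 * (t + u) + 1/2 := by ring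
  have e3 : 2 * (2 * (t + u)) = 4 * t + 4 * u := by ring
  rw [e1, e2]
  rw [h1]
  calc Real.Gamma (2 * (t + u)) * (2:ℝ) ^ (1 - 2 * (t + u)) * √π * Real.Gamma (2 * (t + u) + 1/2)
      = (Real.Gamma (2 * (t+u)) * Real.Gamma (2 * (t + u) + 1/2)) * ((2:ℝ) ^ (1 - 2 * (t + u)) * √π) := by ring
    _ = (Real.Gamma (2 * (2*(t+u))) * (2:ℝ) ^ (1 - 2 * (2 * (t+u))) * √π) * ((2:ℝ) ^ (1 - 2 * (t + u)) * √π) := by rw [h2]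
    _ = Real.Gamma (4 * t + 4*u) * ((2:ℝ) ^ (1 - 2 * (2 * (t+u))) * (2:ℝ) ^ (1 - 2 * (t + u))) * (√π * √π) := by rw [e3]; ring
    _ = _ := by
        rw [← Real.rpow_add (by norm_num : (0:ℝ) < 2), Real.mul_self_sqrt Real.pi_pos.le]
        rw [show (1 - 2 * (2 * (t+u))) + (1 - 2 * (t + u)) = (2 - 6*u) + (-6 * t) by ring]
        rw [Real.rpow_add (by norm_num : (0:ℝ) < 2)]
        rw [show (2:ℝ) ^ (-6 * t) = Real.exp ((-6 * Real.log 2) * t) by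
          rw [Real.rpow_def_of_pos (by norm_num : (0:ℝ) < 2)]; congr 1; ring]
        ring

private lemma gamma_case2 (u t : ℝ) :
    Real.Gamma (t + (u + 1/4)) * Real.Gamma (t + (u + 3/4)) * Real.Gamma (2 * t + 2*u)
      = (π * (2:ℝ) ^ (3/2 - 6*u)) * Real.exp ((-6 * Real.log 2) * t) * Real.Gamma (4 * t + 4*u) := by
  have h1 := Real.Gamma_mul_Gamma_add_half (t + (u + 1/4))
  have h2 := Real.Gamma_mul_Gamma_add_half (2 * (t + u))
  have e1 : t + (u + 3/4) = (t + (u + 1/4)) + 1/2 := by ring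
  have e2 : 2 * (t + (u + 1/4)) = 2 * (t + u) + 1/2 := by ring
  have e3 : 2 * t + 2*u = 2 * (t + u) := by ring
  have e4 : 2 * (2 * (t + u)) = 4 * t + 4 * u := by ring
  rw [e1, h1, e2, e3]
  calc Real.Gamma (2 * (t+u) + 1/2) * (2:ℝ) ^ (1 - (2 * (t + u) + 1/2)) * √π * Real.Gamma (2 * (t + u))
      = (Real.Gamma (2 * (t+u)) * Real.Gamma (2 * (t + u) + 1/2)) * ((2:ℝ) ^ (1 - (2 * (t + u) + 1/2)) * √π) := by ring
    _ = (Real.Gamma (2 * (2*(t+u))) * (2:ℝ) ^ (1 - 2 * (2 * (t+u))) * √π) * ((2:ℝ) ^ (1 - (2 * (t + u) + 1/2)) * √π) := by rw [h2]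
    _ = Real.Gamma (4 * t + 4*u) * ((2:ℝ) ^ (1 - 2 * (2 * (t+u))) * (2:ℝ) ^ (1 - (2 * (t + u) + 1/2))) * (√π * √π) := by rw [e4]; ring
    _ = _ := by
        rw [← Real.rpow_add (by norm_num : (0:ℝ) < 2), Real.mul_self_sqrt Real.pi_pos.le]
        rw [show (1 - 2 * (2 * (t+u))) + (1 - (2 * (t + u) + 1/2)) = (3/2 - 6*u) + (-6 * t) by ring]
        rw [Real.rpow_add (by norm_num : (0:ℝ) < 2)]
        rw [show (2:ℝ) ^ (-6 * t) = Real.exp ((-6 * Real.log 2) * t) by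
          rw [Real.rpow_def_of_pos (by norm_num : (0:ℝ) < 2)]; congr 1; ring]
        ring

private lemma algebra_aux (r₀ r₁ r₂ r₃ c : ℝ)
    (hpoly : ∀ t : ℝ, (t+r₀)*(t+r₁)*((2*t+r₂)*(2*t+r₂+1))
      = c * ((4*t+r₃)*(4*t+r₃+1)*(4*t+r₃+2)*(4*t+r₃+3))) :
    (∃ u : ℝ,
      (((r₀ = u ∧ r₁ = u + 1/2) ∨ (r₀ = u + 1/2 ∧ r₁ = u)) ∧ r₂ = 2 * u + 1 / 2 ∧ r₃ = 4 * u) ∨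
      (((r₀ = u + 1/4 ∧ r₁ = u + 3/4) ∨ (r₀ = u + 3/4 ∧ r₁ = u + 1/4)) ∧ r₂ = 2 * u ∧ r₃ = 4 * u)) := by
  have hc : c = 1/64 := by
    have h0 := hpoly 0; have h1 := hpoly 1; have hm1 := hpoly (-1)
    have h2 := hpoly 2; have hm2 := hpoly (-2)
    linarith [h2, h1, h0, hm1, hm2]
  subst hc
  set v : ℝ := r₃ - 2*r₂ with hv
  have hv1 : v*(v+1)*(v+2)*(v+3) = 0 := by
    have h := hpoly (-(r₂/2))
    rw [hv]
    linear_combination (-64 : ℝ) * h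
  have hv2 : (v-2)*(v-1)*v*(v+1) = 0 := by
    have h := hpoly (-(r₂+1)/2)
    rw [hv]
    linear_combination (-64 : ℝ) * h
  have hv01 : v = 0 ∨ v = -1 := by
    rcases mul_eq_zero.1 hv1 with h | h
    · rcases mul_eq_zero.1 h with h' | h'
      · rcases mul_eq_zero.1 h' with h'' | h''
        · exact Or.inl h''
        · exact Or.inr (by linarith)
      · -- v = -2, contradiction with hv2
        exfalso
        have : v = -2 := by linarith
        rw [this] at hv2; norm_num at hv2
    · -- v = -3
      exfalso
      have : v = -3 := by linarith
      rw [this] at hv2; norm_num at hv2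
  rcases hv01 with hv0 | hvm1
  · -- v = 0 : r₂ = 2u, second case, u = r₃/4
    have hr2 : r₂ = 2 * (r₃/4) := by rw [hv] at hv0; linarith
    refine ⟨r₃/4, Or.inr ⟨?_, hr2, by ring⟩⟩
    have E1 := hpoly (1 - r₃/4)
    have E2 := hpoly (2 - r₃/4)
    rw [hr2] at E1 E2
    have hsum : r₀ + r₁ = 2 * (r₃/4) + 1 := by
      linear_combination (-1/6 : ℝ) * E1 + (1/20 : ℝ) * E2
    have hquad : (r₀ - (r₃/4 + 1/4)) * (r₀ - (r₃/4 + 3/4)) = 0 := by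
      linear_combination (r₀ - r₃/4) * ((-1/6 : ℝ) * E1 + (1/20 : ℝ) * E2)
        - ((1/3 : ℝ) * E1 - (1/20 : ℝ) * E2)
    rcases mul_eq_zero.1 hquad with h | h
    · exact Or.inl ⟨by linarith, by linarith⟩
    · exact Or.inr ⟨by linarith, by linarith⟩
  · -- v = -1 : r₂ = 2u + 1/2, first case
    have hr2 : r₂ = 2 * (r₃/4) + 1/2 := by rw [hv] at hvm1; linarith
    refine ⟨r₃/4, Or.inl ⟨?_, hr2, by ring⟩⟩
    have E1 := hpoly (1 - r₃/4)
    have E2 := hpoly (2 - r₃/4)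
    rw [hr2] at E1 E2
    have hsum : r₀ + r₁ = 2 * (r₃/4) + 1/2 := by
      linear_combination (-4/35 : ℝ) * E1 + (4/99 : ℝ) * E2
    have hquad : (r₀ - r₃/4) * (r₀ - (r₃/4 + 1/2)) = 0 := by
      linear_combination (r₀ - r₃/4) * ((-4/35 : ℝ) * E1 + (4/99 : ℝ) * E2)
        - ((8/35 : ℝ) * E1 - (4/99 : ℝ) * E2)
    rcases mul_eq_zero.1 hquad with h | h
    · exact Or.inl ⟨by linarith, by linarith⟩
    · exact Or.inr ⟨by linarith, by linarith⟩

/-- Example 5.8.3: classification of the solutions of the Gamma identity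
attached to the toric surface `x₀x₁x₂² = x₃⁴`. -/
theorem gamma_identity_toric_1124 (r₀ r₁ r₂ r₃ : ℝ) :
    (∃ a b : ℝ, a ≠ 0 ∧ ∃ T : ℝ, ∀ t : ℝ, T ≤ t →
      Real.Gamma (t + r₀) * Real.Gamma (t + r₁) * Real.Gamma (2 * t + r₂)
        = a * Real.exp (b * t) * Real.Gamma (4 * t + r₃)) ↔
    (∃ u : ℝ,
      (({r₀, r₁} : Multiset ℝ) = {u, u + 1 / 2} ∧ r₂ = 2 * u + 1 / 2 ∧ r₃ = 4 * u) ∨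
      (({r₀, r₁} : Multiset ℝ) = {u + 1 / 4, u + 3 / 4} ∧ r₂ = 2 * u ∧ r₃ = 4 * u)) := by
  constructor
  · rintro ⟨a, b, ha, T, h⟩
    -- Step 1: functional-equation ratio on a half line
    have key : ∀ t : ℝ, max T (1 + (|r₀| + |r₁| + |r₂| + |r₃|)) ≤ t →
        (t+r₀)*(t+r₁)*((2*t+r₂)*(2*t+r₂+1))
          = Real.exp b * ((4*t+r₃)*(4*t+r₃+1)*(4*t+r₃+2)*(4*t+r₃+3)) := by
      intro t ht
      have hT : T ≤ t := le_trans (le_max_left _ _) ht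
      have hB : 1 + (|r₀| + |r₁| + |r₂| + |r₃|) ≤ t := le_trans (le_max_right _ _) ht
      have habs0 := abs_nonneg r₀; have habs1 := abs_nonneg r₁
      have habs2 := abs_nonneg r₂; have habs3 := abs_nonneg r₃
      have hr0 := neg_abs_le r₀; have hr1 := neg_abs_le r₁
      have hr2 := neg_abs_le r₂; have hr3 := neg_abs_le r₃
      have ht1 : (1:ℝ) ≤ t := by linarith
      have p0 : 0 < t + r₀ := by linarith
      have p1 : 0 < t + r₁ := by linarith
      have p2 : 0 < 2*t + r₂ := by linarith
      have p3 : 0 < 4*t + r₃ := by linarith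
      have h0 := h t hT
      have h1 := h (t+1) (by linarith)
      have g0 : Real.Gamma ((t+1) + r₀) = (t + r₀) * Real.Gamma (t + r₀) := by
        rw [show (t+1)+r₀ = (t+r₀)+1 by ring, Real.Gamma_add_one p0.ne']
      have g1 : Real.Gamma ((t+1) + r₁) = (t + r₁) * Real.Gamma (t + r₁) := by
        rw [show (t+1)+r₁ = (t+r₁)+1 by ring, Real.Gamma_add_one p1.ne']
      have g2 : Real.Gamma (2*(t+1) + r₂) = (2*t + r₂ + 1) * ((2*t + r₂) * Real.Gamma (2*t + r₂)) := by
        rw [show 2*(t+1)+r₂ = ((2*t+r₂)+1)+1 by ring,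
          Real.Gamma_add_one (by positivity), Real.Gamma_add_one p2.ne']
      have g3 : Real.Gamma (4*(t+1) + r₃)
          = (4*t+r₃+3) * ((4*t+r₃+2) * ((4*t+r₃+1) * ((4*t+r₃) * Real.Gamma (4*t+r₃)))) := by
        rw [show 4*(t+1)+r₃ = (((4*t+r₃)+1+1+1)+1) by ring, Real.Gamma_add_one (by positivity),
          show (4*t+r₃)+1+1+1 = ((4*t+r₃)+1+1)+1 by ring, Real.Gamma_add_one (by positivity),
          show (4*t+r₃)+1+1 = ((4*t+r₃)+1)+1 by ring, Real.Gamma_add_one (by positivity),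
          Real.Gamma_add_one p3.ne']
        ring
      rw [g0, g1, g2, g3] at h1
      have hexp : Real.exp (b * (t+1)) = Real.exp (b*t) * Real.exp b := by
        rw [← Real.exp_add]; ring_nf
      rw [hexp] at h1
      have hL : Real.Gamma (t + r₀) * Real.Gamma (t + r₁) * Real.Gamma (2 * t + r₂) ≠ 0 := by
        positivity
      have key' : ((t+r₀)*(t+r₁)*((2*t+r₂)*(2*t+r₂+1))) *
          (Real.Gamma (t + r₀) * Real.Gamma (t + r₁) * Real.Gamma (2 * t + r₂))
          = (Real.exp b * ((4*t+r₃)*(4*t+r₃+1)*(4*t+r₃+2)*(4*t+r₃+3))) *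
          (Real.Gamma (t + r₀) * Real.Gamma (t + r₁) * Real.Gamma (2 * t + r₂)) := by
        calc ((t+r₀)*(t+r₁)*((2*t+r₂)*(2*t+r₂+1))) *
            (Real.Gamma (t + r₀) * Real.Gamma (t + r₁) * Real.Gamma (2 * t + r₂))
            = (t + r₀) * Real.Gamma (t + r₀) * ((t + r₁) * Real.Gamma (t + r₁)) *
              ((2*t + r₂ + 1) * ((2*t + r₂) * Real.Gamma (2*t + r₂))) := by ring
          _ = a * (Real.exp (b*t) * Real.exp b) *
              ((4*t+r₃+3) * ((4*t+r₃+2) * ((4*t+r₃+1) * ((4*t+r₃) * Real.Gamma (4*t+r₃))))) := h1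
          _ = (Real.exp b * ((4*t+r₃)*(4*t+r₃+1)*(4*t+r₃+2)*(4*t+r₃+3))) *
              (a * Real.exp (b*t) * Real.Gamma (4*t + r₃)) := by ring
          _ = _ := by rw [← h0]
      exact mul_right_cancel₀ hL key'
    -- Step 2: extend to all t by a polynomial argument
    have hpoly : ∀ t : ℝ, (t+r₀)*(t+r₁)*((2*t+r₂)*(2*t+r₂+1))
        = Real.exp b * ((4*t+r₃)*(4*t+r₃+1)*(4*t+r₃+2)*(4*t+r₃+3)) := by
      set c := Real.exp b with hcdef
      set T₀ := max T (1 + (|r₀| + |r₁| + |r₂| + |r₃|)) with hT₀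
      intro t
      set p : Polynomial ℝ :=
        (Polynomial.X + Polynomial.C r₀) * (Polynomial.X + Polynomial.C r₁) *
          ((Polynomial.C 2 * Polynomial.X + Polynomial.C r₂) *
            (Polynomial.C 2 * Polynomial.X + Polynomial.C r₂ + 1)) -
        Polynomial.C c * ((Polynomial.C 4 * Polynomial.X + Polynomial.C r₃) *
          (Polynomial.C 4 * Polynomial.X + Polynomial.C r₃ + 1) *
          (Polynomial.C 4 * Polynomial.X + Polynomial.C r₃ + 2) *
          (Polynomial.C 4 * Polynomial.X + Polynomial.C r₃ + 3)) with hp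
      have heval : ∀ s : ℝ, p.eval s =
          (s+r₀)*(s+r₁)*((2*s+r₂)*(2*s+r₂+1))
            - c * ((4*s+r₃)*(4*s+r₃+1)*(4*s+r₃+2)*(4*s+r₃+3)) := by
        intro s
        simp only [hp, Polynomial.eval_sub, Polynomial.eval_mul, Polynomial.eval_add,
          Polynomial.eval_X, Polynomial.eval_C, Polynomial.eval_one, Polynomial.eval_ofNat]
      have hp0 : p = 0 := by
        apply Polynomial.eq_zero_of_infinite_isRoot
        apply Set.Infinite.mono _ (Set.Ici_infinite T₀)
        intro s hs
        simp only [Set.mem_setOf_eq, Polynomial.IsRoot, heval]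
        have := key s hs
        linarith
      have := heval t
      rw [hp0] at this
      simp only [Polynomial.eval_zero] at this
      linarith
    obtain ⟨u, hcase⟩ := algebra_aux r₀ r₁ r₂ r₃ (Real.exp b) hpoly
    refine ⟨u, ?_⟩
    rcases hcase with ⟨hpair, h2, h3⟩ | ⟨hpair, h2, h3⟩
    · exact Or.inl ⟨(pair_iff_aux _ _ _ _).2 hpair, h2, h3⟩
    · exact Or.inr ⟨(pair_iff_aux _ _ _ _).2 hpair, h2, h3⟩
  · rintro ⟨u, ⟨hpair, h2, h3⟩ | ⟨hpair, h2, h3⟩⟩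
    · refine ⟨π * (2:ℝ) ^ (2 - 6*u), -6 * Real.log 2,
        by positivity, 0, fun t _ => ?_⟩
      rcases (pair_iff_aux _ _ _ _).1 hpair with ⟨e0, e1⟩ | ⟨e0, e1⟩
      · rw [e0, e1, h2, h3]; exact gamma_case1 u t
      · rw [e0, e1, h2, h3,
          mul_comm (Real.Gamma (t + (u + 1/2))) (Real.Gamma (t + u))]
        exact gamma_case1 u t
    · refine ⟨π * (2:ℝ) ^ (3/2 - 6*u), -6 * Real.log 2,
        by positivity, 0, fun t _ => ?_⟩
      rcases (pair_iff_aux _ _ _ _).1 hpair with ⟨e0, e1⟩ | ⟨e0, e1⟩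
      · rw [e0, e1, h2, h3]; exact gamma_case2 u t
      · rw [e0, e1, h2, h3,
          mul_comm (Real.Gamma (t + (u + 3/4))) (Real.Gamma (t + (u + 1/4)))]
        exact gamma_case2 u t
end
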